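/- arXiv:1606.02209 — 9 statements merged into one kernel-verified Lean document; each statement's English description precedes it below -/
import Mathlib

section
/- If the skew product S : X×𝕋 → X×𝕋 is ergodic with respect to μ×λ, then there is no equivariant family of one-dimensional real subspaces for the cocycle A; that is, there is no measurable map v : X → ℝ² with v(x) ≠ 0 for μ-a.e. x and A(x)·v(x) ∈ span_ℝ{v(T x)} for μ-a.e. x. (Equivalently, the trivial bundle X×ℝ² is irreducible under the action of A.) -/
/-!
Identify `ℝ²` with `ℂ`. The real line `ℝ z` is recorded by `z / conj z` on the unit circle, which
turns an equivariant line field `v` into a measurable `w : X → S¹` with `w (T x) = e(α/π) w x` on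
`X_r` and `w (T x) = e(2β/π) conj (w x)` on `X_f`, where `e(y) = exp (2π i y)`. These are exactly
the fibre maps of `S` read through `e`, so the graph of `w` is `S`-invariant and so is
`(x, y) ↦ Re (e(y) conj (w x)) = cos 2π (y - arg (w x) / 2π)`. By ergodicity this function is
a.e. constant, which is absurd since it changes sign under `y ↦ y + 1/2`.
-/

open MeasureTheory Matrix

/-- Rotation by angle `θ`. -/
noncomputable def rotM (θ : ℝ) : Matrix (Fin 2) (Fin 2) ℝ :=
  !![Real.cos θ, -Real.sin θ; Real.sin θ, Real.cos θ]

/-- Reflection across the line through the origin at angle `β`. -/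
noncomputable def reflM (β : ℝ) : Matrix (Fin 2) (Fin 2) ℝ :=
  !![Real.cos (2 * β), Real.sin (2 * β); Real.sin (2 * β), -Real.cos (2 * β)]

open Complex ComplexConjugate

namespace OrthogonalCocycle

lemma measurableEquivPi_symm_smul (c : ℝ) (v : Fin 2 → ℝ) :
    measurableEquivPi.symm (c • v) = c * measurableEquivPi.symm v := by
  simp only [measurableEquivPi_symm_apply, Pi.smul_apply, smul_eq_mul, ofReal_mul]
  ring

lemma measurableEquivPi_symm_ne_zero {v : Fin 2 → ℝ} (hv : v ≠ 0) :
    measurableEquivPi.symm v ≠ 0 := by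
  simpa using measurableEquivPi.symm.injective.ne hv

lemma measurableEquivPi_symm_rotM_mulVec (θ : ℝ) (v : Fin 2 → ℝ) :
    measurableEquivPi.symm (rotM θ *ᵥ v) = exp (θ * I) * measurableEquivPi.symm v := by
  rw [exp_mul_I]
  simp only [rotM, cons_mulVec, empty_mulVec, dotProduct, Fin.sum_univ_two,
    measurableEquivPi_symm_apply, cons_val_zero, cons_val_one, cons_val_fin_one]
  push_cast
  linear_combination (-sin (θ : ℂ) * v 1) * I_sq

lemma measurableEquivPi_symm_reflM_mulVec (β : ℝ) (v : Fin 2 → ℝ) :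
    measurableEquivPi.symm (reflM β *ᵥ v) =
      exp (↑(2 * β) * I) * conj (measurableEquivPi.symm v) := by
  rw [exp_mul_I]
  simp only [reflM, cons_mulVec, empty_mulVec, dotProduct, Fin.sum_univ_two,
    measurableEquivPi_symm_apply, cons_val_zero, cons_val_one, cons_val_fin_one, map_add, map_mul,
    conj_ofReal, conj_I]
  push_cast
  linear_combination (sin (2 * β : ℂ) * v 1) * I_sq

/-- For `z = r e^{iθ}` this is `e^{2iθ}`: it depends only on the real line `ℝ z`, and identifies
the real projective line with the unit circle. -/
noncomputable def lineCoord (z : ℂ) : ℂ := z / conj z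

lemma lineCoord_mul (z w : ℂ) : lineCoord (z * w) = lineCoord z * lineCoord w := by
  simp only [lineCoord, map_mul, mul_div_mul_comm]

lemma lineCoord_ofReal {c : ℝ} (hc : c ≠ 0) : lineCoord c = 1 := by
  simp [lineCoord, hc]

lemma lineCoord_conj (z : ℂ) : lineCoord (conj z) = conj (lineCoord z) := by
  simp [lineCoord]

lemma lineCoord_exp_mul_I (θ : ℝ) : lineCoord (exp (θ * I)) = exp (↑(2 * θ) * I) := by
  rw [lineCoord, ← exp_conj, map_mul, conj_ofReal, conj_I, div_eq_mul_inv, ← exp_neg, ← exp_add]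
  congr 1
  push_cast
  ring

lemma lineCoord_ne_zero {z : ℂ} (hz : z ≠ 0) : lineCoord z ≠ 0 :=
  div_ne_zero hz ((map_ne_zero _).mpr hz)

lemma measurable_lineCoord : Measurable lineCoord := by
  unfold lineCoord; fun_prop

lemma toCircle_coe_div_pi (θ : ℝ) :
    (AddCircle.toCircle ((θ / Real.pi : ℝ) : UnitAddCircle) : ℂ) = exp (↑(2 * θ) * I) := by
  rw [AddCircle.toCircle_apply_mk, Circle.coe_exp]
  congr 3
  field_simp

lemma lineCoord_eq_of_mem_span {u u' : Fin 2 → ℝ} (hu : measurableEquivPi.symm u ≠ 0)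
    (h : u ∈ Submodule.span ℝ {u'}) :
    lineCoord (measurableEquivPi.symm u') = lineCoord (measurableEquivPi.symm u) := by
  obtain ⟨c, rfl⟩ := Submodule.mem_span_singleton.mp h
  have hc : c ≠ 0 := by rintro rfl; simp at hu
  rw [measurableEquivPi_symm_smul, lineCoord_mul, lineCoord_ofReal hc, one_mul]

lemma lineCoord_of_rotM_mulVec_mem_span {θ : ℝ} {v v' : Fin 2 → ℝ}
    (hv : measurableEquivPi.symm v ≠ 0) (h : rotM θ *ᵥ v ∈ Submodule.span ℝ {v'}) :
    lineCoord (measurableEquivPi.symm v') =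
      AddCircle.toCircle ((θ / Real.pi : ℝ) : UnitAddCircle) *
        lineCoord (measurableEquivPi.symm v) := by
  have hne : measurableEquivPi.symm (rotM θ *ᵥ v) ≠ 0 := by
    rw [measurableEquivPi_symm_rotM_mulVec]; exact mul_ne_zero (exp_ne_zero _) hv
  rw [lineCoord_eq_of_mem_span hne h, measurableEquivPi_symm_rotM_mulVec, lineCoord_mul,
    lineCoord_exp_mul_I, toCircle_coe_div_pi]

lemma lineCoord_of_reflM_mulVec_mem_span {β : ℝ} {v v' : Fin 2 → ℝ}
    (hv : measurableEquivPi.symm v ≠ 0) (h : reflM β *ᵥ v ∈ Submodule.span ℝ {v'}) :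
    lineCoord (measurableEquivPi.symm v') =
      AddCircle.toCircle ((2 * β / Real.pi : ℝ) : UnitAddCircle) *
        conj (lineCoord (measurableEquivPi.symm v)) := by
  have hne : measurableEquivPi.symm (reflM β *ᵥ v) ≠ 0 := by
    rw [measurableEquivPi_symm_reflM_mulVec]
    exact mul_ne_zero (exp_ne_zero _) ((map_ne_zero _).mpr hv)
  rw [lineCoord_eq_of_mem_span hne h, measurableEquivPi_symm_reflM_mulVec, lineCoord_mul,
    lineCoord_exp_mul_I, toCircle_coe_div_pi, lineCoord_conj]

section AddCircle

variable {T : ℝ}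

lemma toCircle_add_mul_conj (y a : AddCircle T) (w : ℂ) :
    (AddCircle.toCircle (y + a) : ℂ) * conj (AddCircle.toCircle a * w) =
      AddCircle.toCircle y * conj w := by
  have h := mul_conj (AddCircle.toCircle a : ℂ)
  rw [Circle.normSq_coe, ofReal_one] at h
  rw [AddCircle.toCircle_add, Circle.coe_mul, map_mul]
  linear_combination (AddCircle.toCircle y * conj w) * h

lemma toCircle_sub_mul_conj (y b : AddCircle T) (w : ℂ) :
    (AddCircle.toCircle (b - y) : ℂ) * conj (AddCircle.toCircle b * conj w) =
      conj (AddCircle.toCircle y * conj w) := by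
  have h := mul_conj (AddCircle.toCircle b : ℂ)
  rw [Circle.normSq_coe, ofReal_one] at h
  rw [sub_eq_add_neg, AddCircle.toCircle_add, AddCircle.toCircle_neg, Circle.coe_mul,
    Circle.coe_inv_eq_conj, map_mul, map_mul, conj_conj]
  linear_combination (conj (AddCircle.toCircle y : ℂ) * w) * h

lemma measurable_re_toCircle_mul_conj {X : Type*} [MeasurableSpace X] {w : X → ℂ}
    (hw : Measurable w) :
    Measurable fun p : X × AddCircle T => ((AddCircle.toCircle p.2 : ℂ) * conj (w p.1)).re :=
  have he : Measurable fun y : AddCircle T => (AddCircle.toCircle y : ℂ) :=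
    (continuous_subtype_val.comp AddCircle.continuous_toCircle).measurable
  measurable_re.comp ((he.comp measurable_snd).mul
    (continuous_conj.measurable.comp (hw.comp measurable_fst)))

lemma eq_zero_of_re_toCircle_mul_conj_ae_eq_const [Fact (0 < T)] {w : ℂ} {c : ℝ}
    (h : (fun y : AddCircle T => ((AddCircle.toCircle y : ℂ) * conj w).re) =ᵐ[volume]
      fun _ => c) :
    w = 0 := by
  set f := fun y : AddCircle T => ((AddCircle.toCircle y : ℂ) * conj w).re
  have hf : f = fun _ => c := Measure.eq_of_ae_eq h (by fun_prop) continuous_const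
  have hT : (T : ℂ) ≠ 0 := ofReal_ne_zero.mpr (Fact.out : 0 < T).ne'
  have h_half : ∀ y, f (y + ↑(T / 2)) = -f y := fun y => by
    simp only [f, AddCircle.toCircle_add, Circle.coe_mul, AddCircle.toCircle_apply_mk,
      Circle.coe_exp]
    rw [show (↑(2 * Real.pi / T * (T / 2)) : ℂ) = Real.pi by push_cast; field_simp, exp_pi_mul_I]
    simp
  have h_zero : ∀ y, f y = 0 := fun y => by
    have := h_half y
    rw [hf] at this ⊢
    linarith
  apply Complex.ext
  · simpa [f] using h_zero 0
  · have := h_zero ↑(T / 4)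
    simp only [f, AddCircle.toCircle_apply_mk, Circle.coe_exp] at this
    rw [show (↑(2 * Real.pi / T * (T / 4)) : ℂ) = Real.pi / 2 by push_cast; field_simp; ring,
      exp_pi_div_two_mul_I] at this
    simpa using this

end AddCircle

end OrthogonalCocycle

open OrthogonalCocycle

open Classical in
theorem stmt0_general
    {X : Type*} [MeasurableSpace X] (μ : Measure X) [IsProbabilityMeasure μ]
    (T : X → X) (Xr : Set X) (α β : X → ℝ) (A : X → Matrix (Fin 2) (Fin 2) ℝ)
    (hAr : ∀ x ∈ Xr, A x = rotM (α x))
    (hAf : ∀ x ∉ Xr, A x = reflM (β x))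
    (S : X × UnitAddCircle → X × UnitAddCircle)
    (hS : ∀ x y, S (x, y) =
      (T x, if x ∈ Xr then y + ↑(α x / Real.pi) else ↑(2 * β x / Real.pi) - y))
    (hSerg : Ergodic S (μ.prod (volume : Measure UnitAddCircle))) :
    ¬ ∃ v : X → (Fin 2 → ℝ), Measurable v ∧ (∀ᵐ x ∂μ, v x ≠ 0) ∧
      (∀ᵐ x ∂μ, (A x).mulVec (v x) ∈ Submodule.span ℝ {v (T x)}) := by
  rintro ⟨v, hv_meas, hv_ne, hv_span⟩
  set w : X → ℂ := fun x => lineCoord (measurableEquivPi.symm (v x))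
  have hz_ne : ∀ᵐ x ∂μ, measurableEquivPi.symm (v x) ≠ 0 :=
    hv_ne.mono fun x hx => measurableEquivPi_symm_ne_zero hx
  have hw_T : ∀ᵐ x ∂μ, w (T x) = if x ∈ Xr
      then AddCircle.toCircle ((α x / Real.pi : ℝ) : UnitAddCircle) * w x
      else AddCircle.toCircle ((2 * β x / Real.pi : ℝ) : UnitAddCircle) * conj (w x) := by
    filter_upwards [hz_ne, hv_span] with x hx h_span
    split_ifs with hxr
    · exact lineCoord_of_rotM_mulVec_mem_span hx (hAr x hxr ▸ h_span)
    · exact lineCoord_of_reflM_mulVec_mem_span hx (hAf x hxr ▸ h_span)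
  set g : X × UnitAddCircle → ℝ := fun p => ((AddCircle.toCircle p.2 : ℂ) * conj (w p.1)).re
  have hg_inv : g ∘ S =ᵐ[μ.prod volume] g := by
    filter_upwards [Measure.quasiMeasurePreserving_fst.ae hw_T] with ⟨x, y⟩ hx
    simp only [Function.comp_apply, hS, g]
    split_ifs at hx ⊢ <;> rw [hx]
    · rw [toCircle_add_mul_conj]
    · rw [toCircle_sub_mul_conj, conj_re]
  have hg_meas : Measurable g := measurable_re_toCircle_mul_conj
    (measurable_lineCoord.comp (measurableEquivPi.symm.measurable.comp hv_meas))
  obtain ⟨c, hc⟩ := hSerg.ae_eq_const_of_ae_eq_comp_ae hg_meas.aestronglyMeasurable hg_inv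
  obtain ⟨x, hx_ne, hx_const⟩ := (hz_ne.and (Measure.ae_ae_of_ae_prod hc)).exists
  exact lineCoord_ne_zero hx_ne (eq_zero_of_re_toCircle_mul_conj_ae_eq_const hx_const)

open Classical in
/-- If the skew product `S : X × 𝕋 → X × 𝕋` is ergodic with respect to `μ × λ`, then there is
no equivariant family of one-dimensional real subspaces for the cocycle `A`. -/
theorem stmt0
    {X : Type*} [MeasurableSpace X] (μ : Measure X) [IsProbabilityMeasure μ]
    (T T' : X → X) (hT : Ergodic T μ)
    (hT'meas : MeasurePreserving T' μ μ)
    (hTinv : Function.LeftInverse T' T) (hTinv' : Function.RightInverse T' T)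
    (Xr : Set X) (hXr : MeasurableSet Xr)
    (α β : X → ℝ) (hα : Measurable α) (hβ : Measurable β)
    (A : X → Matrix (Fin 2) (Fin 2) ℝ) (hAmeas : ∀ i j, Measurable fun x => A x i j)
    (hAr : ∀ x ∈ Xr, A x = rotM (α x))
    (hAf : ∀ x ∉ Xr, A x = reflM (β x))
    (S : X × UnitAddCircle → X × UnitAddCircle)
    (hS : ∀ x y, S (x, y) =
      (T x, if x ∈ Xr then y + ↑(α x / Real.pi) else ↑(2 * β x / Real.pi) - y))
    (hSerg : Ergodic S (μ.prod (volume : Measure UnitAddCircle))) :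
    ¬ ∃ v : X → (Fin 2 → ℝ), Measurable v ∧ (∀ᵐ x ∂μ, v x ≠ 0) ∧
      (∀ᵐ x ∂μ, (A x).mulVec (v x) ∈ Submodule.span ℝ {v (T x)}) :=
  stmt0_general μ T Xr α β A hAr hAf S hS hSerg
end

section
/- If both skew products R : X×ℤ₂ → X×ℤ₂ and S : X×𝕋 → X×𝕋 are ergodic (with respect to μ×c and μ×λ respectively), then there is no equivariant family of one-dimensional complex subspaces for the cocycle A acting on ℂ²; that is, there is no measurable map v : X → ℂ² with v(x) ≠ 0 for μ-a.e. x and A(x)·v(x) ∈ span_ℂ{v(T x)} for μ-a.e. x. (Equivalently, the trivial bundle X×ℂ² is irreducible under the action of A.) -/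
/-!
In the coordinates `p = u 0 + i u 1`, `q = u 0 - i u 1` a rotation by `θ` acts diagonally, by
`e^{iθ}` and `e^{-iθ}`, and the reflection at angle `β` antidiagonally, by `e^{±2iβ}`. Hence for an
equivariant line `ℂ v` the set where `v` is isotropic (`p q = 0`) is `T`-invariant, so it is null
or conull. If it is conull, which of `p`, `q` vanishes is a `ℤ₂`-valued function whose graph is
`R`-invariant. If it is null, `arg p - arg q`, read in turns, is a section `φ : X → 𝕋` with
`φ ∘ T = φ + α/π` on `Xr` and `φ ∘ T = 2β/π - φ` off `Xr`, so `dist y (φ x)` is `S`-invariant.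
Either way one of the skew products has a nonconstant invariant function.
-/

open MeasureTheory Matrix

open scoped ENNReal

section SkewProduct

variable {X : Type*} [MeasurableSpace X] {μ : Measure X} {T : X → X}

theorem not_ergodic_skewProduct_of_invariant_graph {G : Type*} [Fintype G] [Nontrivial G]
    [MeasurableSpace G] [MeasurableSingletonClass G] [IsProbabilityMeasure μ]
    {r : X → G → G} {R : X × G → X × G} (hR : ∀ x a, R (x, a) = (T x, r x a))
    (hr : ∀ x, Function.Injective (r x)) {f : X → G} (hf : Measurable f)
    (hfr : ∀ᵐ x ∂μ, r x (f x) = f (T x)) :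
    ¬ Ergodic R (μ.prod ((Fintype.card G : ℝ≥0∞)⁻¹ • Measure.count)) := by
  intro hRerg
  set ν : Measure G := (Fintype.card G : ℝ≥0∞)⁻¹ • Measure.count
  have hν : ∀ a, ν {a} = (Fintype.card G : ℝ≥0∞)⁻¹ := fun a => by
    simp [ν]
  have : IsProbabilityMeasure ν := ⟨by
    simp [ν, Measure.count_univ, ENNReal.inv_mul_cancel]⟩
  set E : Set (X × G) := {z | f z.1 = z.2}
  have hE : MeasurableSet E := measurableSet_eq_fun (hf.comp measurable_fst) measurable_snd
  have hEinv : R ⁻¹' E =ᵐ[μ.prod ν] E := by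
    rw [Filter.eventuallyEq_set]
    filter_upwards [Measure.quasiMeasurePreserving_fst.ae hfr] with ⟨x, a⟩ hx
    change f (R (x, a)).1 = (R (x, a)).2 ↔ f x = a
    rw [hR, ← hx, (hr x).eq_iff]
  have hEμ : (μ.prod ν) E = (Fintype.card G : ℝ≥0∞)⁻¹ := by
    rw [Measure.prod_apply hE]
    simp [E, Set.preimage, hν]
  rcases hRerg.quasiErgodic.ae_empty_or_univ₀ hE.nullMeasurableSet hEinv with h | h
  · simpa [hEμ] using measure_congr h
  · simpa [hEμ, Fintype.one_lt_card.ne'] using measure_congr h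

theorem not_ergodic_skewProduct_of_invariant_dist_to_section {Y : Type*} [MetricSpace Y]
    [MeasurableSpace Y] [BorelSpace Y] [SecondCountableTopology Y] [Nontrivial Y] [NeZero μ]
    {ν : Measure Y} [SFinite ν] [ν.IsOpenPosMeasure]
    {s : X → Y → Y} {S : X × Y → X × Y} (hS : ∀ x y, S (x, y) = (T x, s x y))
    {φ : X → Y} (hφ : Measurable φ) (hs : ∀ᵐ x ∂μ, ∀ y, dist (s x y) (φ (T x)) = dist y (φ x)) :
    ¬ Ergodic S (μ.prod ν) := by
  intro hSerg
  set H : X × Y → ℝ := fun z => dist z.2 (φ z.1)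
  have hH : Measurable H := measurable_snd.dist (hφ.comp measurable_fst)
  have hHinv : H ∘ S =ᵐ[μ.prod ν] H := by
    filter_upwards [Measure.quasiMeasurePreserving_fst.ae hs] with ⟨x, y⟩ hx
    simp [H, hS, hx]
  obtain ⟨k, hk⟩ := hSerg.ae_eq_const_of_ae_eq_comp₀ hH.nullMeasurable hHinv
  obtain ⟨x₀, hx₀⟩ := (Measure.ae_ae_of_ae_prod hk).exists
  have hconst : (fun y => dist y (φ x₀)) = fun _ => k :=
    ((continuous_id.dist continuous_const).ae_eq_iff_eq ν continuous_const).mp hx₀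
  obtain ⟨y, hy⟩ := exists_ne (φ x₀)
  have h₀ := congrFun hconst (φ x₀)
  have h₁ := congrFun hconst y
  have hk0 : k = 0 := by simpa using h₀.symm
  exact hy (dist_eq_zero.mp (h₁.trans hk0))

end SkewProduct

instance {p : ℝ} [hp : Fact (0 < p)] : Nontrivial (AddCircle p) :=
  ⟨⟨↑(p / 2), 0, fun h => by
    have := AddCircle.norm_half_period_eq p
    rw [h, norm_zero, abs_of_pos hp.out] at this
    linarith [hp.out]⟩⟩

section CircularCoordinates

open Complex

def circPlus (u : Fin 2 → ℂ) : ℂ := u 0 + I * u 1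

def circMinus (u : Fin 2 → ℂ) : ℂ := u 0 - I * u 1

noncomputable def circAngle (u : Fin 2 → ℂ) : Real.Angle := arg (circPlus u) - arg (circMinus u)

lemma continuous_circPlus : Continuous circPlus := by unfold circPlus; fun_prop

lemma continuous_circMinus : Continuous circMinus := by unfold circMinus; fun_prop

lemma circPlus_smul (c : ℂ) (u : Fin 2 → ℂ) : circPlus (c • u) = c * circPlus u := by
  simp only [circPlus, Pi.smul_apply, smul_eq_mul]; ring

lemma circMinus_smul (c : ℂ) (u : Fin 2 → ℂ) : circMinus (c • u) = c * circMinus u := by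
  simp only [circMinus, Pi.smul_apply, smul_eq_mul]; ring

lemma eq_zero_of_circPlus_eq_zero_of_circMinus_eq_zero {u : Fin 2 → ℂ} (hp : circPlus u = 0)
    (hm : circMinus u = 0) : u = 0 := by
  simp only [circPlus, circMinus] at hp hm
  ext i
  fin_cases i
  · show u 0 = 0
    linear_combination (hp + hm) / 2
  · show u 1 = 0
    linear_combination (hm - hp) * I / 2 + u 1 * I_sq

lemma circPlus_rotM_mulVec (θ : ℝ) (u : Fin 2 → ℂ) :
    circPlus ((rotM θ).map ofReal *ᵥ u) = exp (θ * I) * circPlus u := by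
  rw [exp_mul_I]
  simp [circPlus, rotM, mulVec, dotProduct, Fin.sum_univ_two]
  linear_combination (-sin θ * u 1) * I_sq

-- Exponents are written as real multiples of `I`, the form `arg_exp_mul_I_mul_coe_angle` takes.
lemma circMinus_rotM_mulVec (θ : ℝ) (u : Fin 2 → ℂ) :
    circMinus ((rotM θ).map ofReal *ᵥ u) = exp (↑(-θ) * I) * circMinus u := by
  rw [exp_mul_I]
  simp [circMinus, rotM, mulVec, dotProduct, Fin.sum_univ_two]
  linear_combination (-sin θ * u 1) * I_sq

lemma circPlus_reflM_mulVec (β : ℝ) (u : Fin 2 → ℂ) :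
    circPlus ((reflM β).map ofReal *ᵥ u) = exp (↑(2 * β) * I) * circMinus u := by
  rw [exp_mul_I]
  simp [circPlus, circMinus, reflM, mulVec, dotProduct, Fin.sum_univ_two]
  linear_combination (sin (2 * β) * u 1) * I_sq

lemma circMinus_reflM_mulVec (β : ℝ) (u : Fin 2 → ℂ) :
    circMinus ((reflM β).map ofReal *ᵥ u) = exp (↑(-(2 * β)) * I) * circPlus u := by
  rw [exp_mul_I]
  simp [circPlus, circMinus, reflM, mulVec, dotProduct, Fin.sum_univ_two]
  linear_combination (sin (2 * β) * u 1) * I_sq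

lemma arg_exp_mul_I_mul_coe_angle (t : ℝ) {z : ℂ} (hz : z ≠ 0) :
    (arg (exp (t * I) * z) : Real.Angle) = t + arg z := by
  rw [arg_mul_coe_angle (exp_ne_zero _) hz, arg_exp_mul_I, Real.Angle.coe_toIocMod]

lemma circAngle_smul {c : ℂ} (hc : c ≠ 0) {u : Fin 2 → ℂ} (hp : circPlus u ≠ 0)
    (hm : circMinus u ≠ 0) : circAngle (c • u) = circAngle u := by
  rw [circAngle, circAngle, circPlus_smul, circMinus_smul, arg_mul_coe_angle hc hp,
    arg_mul_coe_angle hc hm]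
  abel

lemma circAngle_rotM_mulVec (θ : ℝ) {u : Fin 2 → ℂ} (hp : circPlus u ≠ 0)
    (hm : circMinus u ≠ 0) :
    circAngle ((rotM θ).map ofReal *ᵥ u) = ↑(2 * θ) + circAngle u := by
  rw [circAngle, circAngle, circPlus_rotM_mulVec, circMinus_rotM_mulVec,
    arg_exp_mul_I_mul_coe_angle _ hp, arg_exp_mul_I_mul_coe_angle _ hm, two_mul,
    Real.Angle.coe_add, Real.Angle.coe_neg]
  abel

lemma circAngle_reflM_mulVec (β : ℝ) {u : Fin 2 → ℂ} (hp : circPlus u ≠ 0)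
    (hm : circMinus u ≠ 0) :
    circAngle ((reflM β).map ofReal *ᵥ u) = ↑(4 * β) - circAngle u := by
  rw [circAngle, circAngle, circPlus_reflM_mulVec, circMinus_reflM_mulVec,
    arg_exp_mul_I_mul_coe_angle _ hm, arg_exp_mul_I_mul_coe_angle _ hp,
    show 4 * β = 2 * β + 2 * β by ring, Real.Angle.coe_add, Real.Angle.coe_neg]
  abel

lemma exp_mul_I_mul_exp_neg_mul_I (t : ℝ) : exp (t * I) * exp (↑(-t) * I) = 1 := by
  rw [← exp_add]; push_cast; simp

lemma circPlus_mul_circMinus_rotM_mulVec (θ : ℝ) (u : Fin 2 → ℂ) :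
    circPlus ((rotM θ).map ofReal *ᵥ u) * circMinus ((rotM θ).map ofReal *ᵥ u) =
      circPlus u * circMinus u := by
  rw [circPlus_rotM_mulVec, circMinus_rotM_mulVec]
  linear_combination circPlus u * circMinus u * exp_mul_I_mul_exp_neg_mul_I θ

lemma circPlus_mul_circMinus_reflM_mulVec (β : ℝ) (u : Fin 2 → ℂ) :
    circPlus ((reflM β).map ofReal *ᵥ u) * circMinus ((reflM β).map ofReal *ᵥ u) =
      circPlus u * circMinus u := by
  rw [circPlus_reflM_mulVec, circMinus_reflM_mulVec]
  linear_combination circPlus u * circMinus u * exp_mul_I_mul_exp_neg_mul_I (2 * β)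

noncomputable def isotropicIndex (u : Fin 2 → ℂ) : ZMod 2 := if circPlus u = 0 then 1 else 0

lemma measurable_isotropicIndex : Measurable isotropicIndex :=
  Measurable.ite (measurableSet_eq_fun continuous_circPlus.measurable measurable_const)
    measurable_const measurable_const

lemma isotropicIndex_smul {c : ℂ} (hc : c ≠ 0) (u : Fin 2 → ℂ) :
    isotropicIndex (c • u) = isotropicIndex u := by
  simp [isotropicIndex, circPlus_smul, hc]

lemma isotropicIndex_rotM_mulVec (θ : ℝ) (u : Fin 2 → ℂ) :
    isotropicIndex ((rotM θ).map ofReal *ᵥ u) = isotropicIndex u := by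
  simp only [isotropicIndex, circPlus_rotM_mulVec, mul_eq_zero, exp_ne_zero, false_or]

lemma isotropicIndex_reflM_mulVec (β : ℝ) {u : Fin 2 → ℂ} (hu : u ≠ 0)
    (hiso : circPlus u * circMinus u = 0) :
    isotropicIndex ((reflM β).map ofReal *ᵥ u) = isotropicIndex u + 1 := by
  have hone : circPlus u = 0 ↔ circMinus u ≠ 0 := by
    constructor
    · exact fun hp hm => hu (eq_zero_of_circPlus_eq_zero_of_circMinus_eq_zero hp hm)
    · exact fun hm => (mul_eq_zero.mp hiso).resolve_right hm
  simp only [isotropicIndex, circPlus_reflM_mulVec, mul_eq_zero, exp_ne_zero, false_or]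
  by_cases hp : circPlus u = 0
  · rw [if_neg (hone.mp hp), if_pos hp]
    decide
  · rw [if_pos (not_not.mp (mt hone.mpr hp)), if_neg hp, zero_add]

noncomputable def angleToTurns : Real.Angle ≃+ UnitAddCircle :=
  AddCircle.equivAddCircle (2 * Real.pi) 1 Real.two_pi_pos.ne' one_ne_zero

lemma angleToTurns_coe (t : ℝ) : angleToTurns t = ((t / (2 * Real.pi) : ℝ) : UnitAddCircle) := by
  change AddCircle.equivAddCircle _ _ _ _ ((t : ℝ) : AddCircle (2 * Real.pi)) = _
  rw [AddCircle.equivAddCircle_apply_mk, mul_one, div_eq_mul_inv]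

lemma angleToTurns_two_mul (t : ℝ) :
    angleToTurns ↑(2 * t) = ((t / Real.pi : ℝ) : UnitAddCircle) := by
  rw [angleToTurns_coe]
  congr 1
  field_simp

noncomputable def circTurns (u : Fin 2 → ℂ) : UnitAddCircle := angleToTurns (circAngle u)

lemma measurable_circTurns : Measurable circTurns := by
  have : circTurns =
      fun u => (((arg (circPlus u) - arg (circMinus u)) / (2 * Real.pi) : ℝ) : UnitAddCircle) := by
    ext u
    rw [circTurns, circAngle, ← Real.Angle.coe_sub, angleToTurns_coe]
  rw [this]
  exact (AddCircle.continuous_mk' 1).measurable.comp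
    (((measurable_arg.comp continuous_circPlus.measurable).sub
      (measurable_arg.comp continuous_circMinus.measurable)).div_const _)

end CircularCoordinates

section EquivariantLine

open Complex

variable {X : Type*} {T : X → X} {Xr : Set X} {α β : X → ℝ} {A : X → Matrix (Fin 2) (Fin 2) ℝ}

lemma map_ofReal_mulVec_ne_zero (hAr : ∀ x ∈ Xr, A x = rotM (α x))
    (hAf : ∀ x ∉ Xr, A x = reflM (β x)) (x : X) {u : Fin 2 → ℂ} (hu : u ≠ 0) :
    (A x).map ofReal *ᵥ u ≠ 0 := by
  intro h
  have hp : circPlus ((A x).map ofReal *ᵥ u) = 0 := by rw [h]; simp [circPlus]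
  have hm : circMinus ((A x).map ofReal *ᵥ u) = 0 := by rw [h]; simp [circMinus]
  by_cases hx : x ∈ Xr
  · rw [hAr x hx, circPlus_rotM_mulVec, mul_eq_zero] at hp
    rw [hAr x hx, circMinus_rotM_mulVec, mul_eq_zero] at hm
    exact hu (eq_zero_of_circPlus_eq_zero_of_circMinus_eq_zero
      (hp.resolve_left (exp_ne_zero _)) (hm.resolve_left (exp_ne_zero _)))
  · rw [hAf x hx, circPlus_reflM_mulVec, mul_eq_zero] at hp
    rw [hAf x hx, circMinus_reflM_mulVec, mul_eq_zero] at hm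
    exact hu (eq_zero_of_circPlus_eq_zero_of_circMinus_eq_zero
      (hm.resolve_left (exp_ne_zero _)) (hp.resolve_left (exp_ne_zero _)))

lemma circPlus_mul_circMinus_map_ofReal_mulVec (hAr : ∀ x ∈ Xr, A x = rotM (α x))
    (hAf : ∀ x ∉ Xr, A x = reflM (β x)) (x : X) (u : Fin 2 → ℂ) :
    circPlus ((A x).map ofReal *ᵥ u) * circMinus ((A x).map ofReal *ᵥ u) =
      circPlus u * circMinus u := by
  by_cases hx : x ∈ Xr
  · rw [hAr x hx, circPlus_mul_circMinus_rotM_mulVec]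
  · rw [hAf x hx, circPlus_mul_circMinus_reflM_mulVec]

variable [MeasurableSpace X] {μ : Measure X} {v : X → Fin 2 → ℂ}

lemma ae_exists_map_ofReal_mulVec_eq_smul (hAr : ∀ x ∈ Xr, A x = rotM (α x))
    (hAf : ∀ x ∉ Xr, A x = reflM (β x)) (hv : ∀ᵐ x ∂μ, v x ≠ 0)
    (hspan : ∀ᵐ x ∂μ, (A x).map ofReal *ᵥ v x ∈ Submodule.span ℂ {v (T x)}) :
    ∀ᵐ x ∂μ, ∃ c : ℂ, c ≠ 0 ∧ (A x).map ofReal *ᵥ v x = c • v (T x) := by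
  filter_upwards [hv, hspan] with x hx hxspan
  obtain ⟨c, hc⟩ := Submodule.mem_span_singleton.mp hxspan
  refine ⟨c, ?_, hc.symm⟩
  rintro rfl
  exact map_ofReal_mulVec_ne_zero hAr hAf x hx (by rw [← hc, zero_smul])

lemma preimage_isotropic_ae_eq (hAr : ∀ x ∈ Xr, A x = rotM (α x))
    (hAf : ∀ x ∉ Xr, A x = reflM (β x))
    (hc : ∀ᵐ x ∂μ, ∃ c : ℂ, c ≠ 0 ∧ (A x).map ofReal *ᵥ v x = c • v (T x)) :
    T ⁻¹' {x | circPlus (v x) * circMinus (v x) = 0} =ᵐ[μ]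
      {x | circPlus (v x) * circMinus (v x) = 0} := by
  rw [Filter.eventuallyEq_set]
  filter_upwards [hc] with x ⟨c, hc0, hx⟩
  have hform := circPlus_mul_circMinus_map_ofReal_mulVec hAr hAf x (v x)
  rw [hx, circPlus_smul, circMinus_smul] at hform
  simp only [Set.mem_preimage, Set.mem_ofPred_eq, ← hform]
  simp [hc0]

open Classical in
lemma ae_isotropicIndex_comp (hAr : ∀ x ∈ Xr, A x = rotM (α x))
    (hAf : ∀ x ∉ Xr, A x = reflM (β x)) (hv : ∀ᵐ x ∂μ, v x ≠ 0)
    (hc : ∀ᵐ x ∂μ, ∃ c : ℂ, c ≠ 0 ∧ (A x).map ofReal *ᵥ v x = c • v (T x))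
    (hiso : ∀ᵐ x ∂μ, circPlus (v x) * circMinus (v x) = 0) :
    ∀ᵐ x ∂μ, (if x ∈ Xr then isotropicIndex (v x) else isotropicIndex (v x) + 1) =
      isotropicIndex (v (T x)) := by
  filter_upwards [hv, hc, hiso] with x hx ⟨c, hc0, hxc⟩ hxiso
  rw [← isotropicIndex_smul hc0 (v (T x)), ← hxc]
  split_ifs with hxr
  · rw [hAr x hxr, isotropicIndex_rotM_mulVec]
  · rw [hAf x hxr, isotropicIndex_reflM_mulVec _ hx hxiso]

open Classical in
lemma ae_dist_circTurns_comp (hAr : ∀ x ∈ Xr, A x = rotM (α x))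
    (hAf : ∀ x ∉ Xr, A x = reflM (β x))
    (hc : ∀ᵐ x ∂μ, ∃ c : ℂ, c ≠ 0 ∧ (A x).map ofReal *ᵥ v x = c • v (T x))
    (hiso : ∀ᵐ x ∂μ, circPlus (v x) * circMinus (v x) ≠ 0) :
    ∀ᵐ x ∂μ, ∀ y : UnitAddCircle,
      dist (if x ∈ Xr then y + ↑(α x / Real.pi) else ↑(2 * β x / Real.pi) - y)
        (circTurns (v (T x))) = dist y (circTurns (v x)) := by
  filter_upwards [hc, hiso] with x ⟨c, hc0, hxc⟩ hxiso y
  have hform := circPlus_mul_circMinus_map_ofReal_mulVec hAr hAf x (v x)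
  rw [hxc, circPlus_smul, circMinus_smul, mul_mul_mul_comm] at hform
  obtain ⟨hp, hm⟩ := mul_ne_zero_iff.mp hxiso
  obtain ⟨hpT, hmT⟩ := mul_ne_zero_iff.mp (right_ne_zero_of_mul (hform ▸ hxiso))
  have hangle : circAngle (v (T x)) = circAngle ((A x).map ofReal *ᵥ v x) := by
    rw [hxc, circAngle_smul hc0 hpT hmT]
  rw [circTurns, hangle]
  split_ifs with hxr
  · rw [hAr x hxr, circAngle_rotM_mulVec _ hp hm, map_add, angleToTurns_two_mul, add_comm y,
      dist_add_left, circTurns]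
  · rw [hAf x hxr, circAngle_reflM_mulVec _ hp hm, map_sub,
      show 4 * β x = 2 * (2 * β x) by ring, angleToTurns_two_mul, dist_sub_left, circTurns]

end EquivariantLine

open Classical in
theorem stmt1_general
    {X : Type*} [MeasurableSpace X] (μ : Measure X) [IsProbabilityMeasure μ]
    (T : X → X) (hT : Ergodic T μ)
    (Xr : Set X)
    (α β : X → ℝ)
    (A : X → Matrix (Fin 2) (Fin 2) ℝ)
    (hAr : ∀ x ∈ Xr, A x = rotM (α x))
    (hAf : ∀ x ∉ Xr, A x = reflM (β x))
    (S : X × UnitAddCircle → X × UnitAddCircle)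
    (hS : ∀ x y, S (x, y) =
      (T x, if x ∈ Xr then y + ↑(α x / Real.pi) else ↑(2 * β x / Real.pi) - y))
    (R : X × ZMod 2 → X × ZMod 2)
    (hR : ∀ x a, R (x, a) = (T x, if x ∈ Xr then a else a + 1))
    (hSerg : Ergodic S (μ.prod (volume : Measure UnitAddCircle)))
    (hRerg : Ergodic R (μ.prod ((2 : ENNReal)⁻¹ • (Measure.count : Measure (ZMod 2))))) :
    ¬ ∃ v : X → (Fin 2 → ℂ), Measurable v ∧ (∀ᵐ x ∂μ, v x ≠ 0) ∧
      (∀ᵐ x ∂μ, ((A x).map Complex.ofReal).mulVec (v x) ∈ Submodule.span ℂ {v (T x)}) := by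
  rintro ⟨v, hv, hv0, hspan⟩
  have hc := ae_exists_map_ofReal_mulVec_eq_smul hAr hAf hv0 hspan
  have hmeas : MeasurableSet {x | circPlus (v x) * circMinus (v x) = 0} :=
    measurableSet_eq_fun ((continuous_circPlus.mul continuous_circMinus).measurable.comp hv)
      measurable_const
  rcases hT.quasiErgodic.ae_mem_or_ae_notMem₀ hmeas.nullMeasurableSet
    (preimage_isotropic_ae_eq hAr hAf hc) with hiso | hiso
  · refine not_ergodic_skewProduct_of_invariant_graph hR (fun x => ?_)
      (measurable_isotropicIndex.comp hv) (ae_isotropicIndex_comp hAr hAf hv0 hc hiso) ?_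
    · split_ifs
      exacts [Function.injective_id, add_left_injective 1]
    · rwa [ZMod.card, Nat.cast_ofNat]
  · exact not_ergodic_skewProduct_of_invariant_dist_to_section hS (measurable_circTurns.comp hv)
      (ae_dist_circTurns_comp hAr hAf hc hiso) hSerg

open Classical in
/-- If both skew products `R : X × ℤ₂ → X × ℤ₂` and `S : X × 𝕋 → X × 𝕋` are ergodic
(with respect to `μ × c` and `μ × λ` respectively), then there is no equivariant family of
one-dimensional complex subspaces for the cocycle `A`. -/
theorem stmt1
    {X : Type*} [MeasurableSpace X] (μ : Measure X) [IsProbabilityMeasure μ]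
    (T T' : X → X) (hT : Ergodic T μ)
    (hT'meas : MeasurePreserving T' μ μ)
    (hTinv : Function.LeftInverse T' T) (hTinv' : Function.RightInverse T' T)
    (Xr : Set X) (hXr : MeasurableSet Xr)
    (α β : X → ℝ) (hα : Measurable α) (hβ : Measurable β)
    (A : X → Matrix (Fin 2) (Fin 2) ℝ) (hAmeas : ∀ i j, Measurable fun x => A x i j)
    (hAr : ∀ x ∈ Xr, A x = rotM (α x))
    (hAf : ∀ x ∉ Xr, A x = reflM (β x))
    (S : X × UnitAddCircle → X × UnitAddCircle)
    (hS : ∀ x y, S (x, y) =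
      (T x, if x ∈ Xr then y + ↑(α x / Real.pi) else ↑(2 * β x / Real.pi) - y))
    (R : X × ZMod 2 → X × ZMod 2)
    (hR : ∀ x a, R (x, a) = (T x, if x ∈ Xr then a else a + 1))
    (hSerg : Ergodic S (μ.prod (volume : Measure UnitAddCircle)))
    (hRerg : Ergodic R (μ.prod ((2 : ENNReal)⁻¹ • (Measure.count : Measure (ZMod 2))))) :
    ¬ ∃ v : X → (Fin 2 → ℂ), Measurable v ∧ (∀ᵐ x ∂μ, v x ≠ 0) ∧
      (∀ᵐ x ∂μ, ((A x).map Complex.ofReal).mulVec (v x) ∈ Submodule.span ℂ {v (T x)}) :=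
  stmt1_general μ T hT Xr α β A hAr hAf S hS R hR hSerg hRerg
end

section
/- If at least one of the skew products R : X×ℤ₂ → X×ℤ₂ or S : X×𝕋 → X×𝕋 is ergodic (with respect to μ×c, respectively μ×λ), then the cocycle A is not cohomologous to a scalar multiple of the identity: there exist no measurable maps C : X → GL₂(ℂ) and λ : X → ℂ such that C(T x)⁻¹ A(x) C(x) = λ(x)·I for μ-a.e. x ∈ X. -/
/-!
Write the cohomology relation as `A x * C x = λ x • C (T x)`.

Since `A x` is orthogonal with determinant `1` on `Xr` and `-1` off it, the matrix
`(det C)⁻¹ • Cᵀ C` gets multiplied by `det (A x)` along orbits, so each entry `f` lifts to the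
`R`-invariant function `(x, a) ↦ (-1)ᵃ f x`. Ergodicity of `R` forces `Cᵀ C = 0`, which is absurd
since `det (Cᵀ C) = (det C)²`.

In the coordinates `z = v₀ + i v₁`, `z̄ = v₀ - i v₁` of the first column `v` of `C`, rotations act
diagonally and reflections swap `z` and `z̄`, just as `S` acts on the characters `e(±y)`. Hence
`(z̄² e(y) - z² e(-y)) / det C` is `S`-invariant; ergodicity of `S` makes it constant in `y`, and
orthogonality of characters then gives `z = z̄ = 0`, i.e. a vanishing column.
-/

open MeasureTheory Matrix

open Complex

section CohomologyRelation

variable {n R : Type*} [Fintype n] [DecidableEq n] [CommRing R] {B N M : Matrix n n R} {c : R}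

lemma mul_eq_smul_of_inv_mul_mul_eq_smul (hM : IsUnit M.det) (h : M⁻¹ * B * N = c • 1) :
    B * N = c • M := by
  rw [← mul_nonsing_inv_cancel_left M (B * N) hM, ← Matrix.mul_assoc M⁻¹, h, Matrix.mul_smul,
    Matrix.mul_one]

lemma mulVec_col_of_mul_eq_smul (h : B * N = c • M) (j : n) :
    B *ᵥ N.col j = c • M.col j := by
  rw [← mulVec_single_one, ← mulVec_single_one, mulVec_mulVec, h, smul_mulVec]

end CohomologyRelation

section TwoByTwo

variable {K : Type*} [Field K] {B N M : Matrix (Fin 2) (Fin 2) K} {c : K}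

lemma det_mul_det_of_mul_eq_smul (h : B * N = c • M) : B.det * N.det = c ^ 2 * M.det := by
  rw [← det_mul, h, det_smul, Fintype.card_fin]

lemma inv_det_smul_gram_of_mul_eq_smul (hB : Bᵀ * B = 1) (hN : N.det ≠ 0)
    (h : B * N = c • M) :
    M.det⁻¹ • (Mᵀ * M) = B.det • N.det⁻¹ • (Nᵀ * N) := by
  have hB2 : B.det ^ 2 = 1 := by
    rw [← det_one (n := Fin 2) (R := K), ← hB, det_mul, det_transpose, sq]
  have hdet := det_mul_det_of_mul_eq_smul h
  have hgram : c ^ 2 • (Mᵀ * M) = Nᵀ * N := by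
    rw [sq, mul_smul, ← smul_mul_assoc, ← Matrix.mul_smul, ← transpose_smul, ← h,
      transpose_mul, Matrix.mul_assoc, ← Matrix.mul_assoc Bᵀ, hB, Matrix.one_mul]
  have hB0 : B.det ≠ 0 := by
    rintro h0
    simp [h0] at hB2
  have hM : M.det ≠ 0 := fun hM => mul_ne_zero hB0 hN (by rw [hdet, hM, mul_zero])
  rw [← hgram, smul_smul, smul_smul]
  congr 1
  field_simp
  linear_combination B.det * hdet - N.det * hB2

end TwoByTwo

section Complexification

variable {n : Type*} [Fintype n] [DecidableEq n]

lemma transpose_mul_self_map_ofReal {A : Matrix n n ℝ} (h : Aᵀ * A = 1) :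
    (A.map ofReal)ᵀ * A.map ofReal = 1 := by
  have := congrArg (Matrix.map · ofRealHom) h
  rwa [Matrix.map_mul, Matrix.map_one _ (map_zero _) (map_one _)] at this

lemma det_map_ofReal (A : Matrix n n ℝ) : (A.map ofReal).det = A.det :=
  (ofRealHom.map_det A).symm

end Complexification

lemma rotM_transpose_mul_self (θ : ℝ) : (rotM θ)ᵀ * rotM θ = 1 := by
  ext i j
  fin_cases i <;> fin_cases j <;> simp [rotM, Matrix.mul_apply, Fin.sum_univ_two, ← sq] <;> ring

lemma reflM_transpose_mul_self (β : ℝ) : (reflM β)ᵀ * reflM β = 1 := by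
  ext i j
  fin_cases i <;> fin_cases j <;> simp [reflM, Matrix.mul_apply, Fin.sum_univ_two, ← sq] <;> ring

lemma det_rotM (θ : ℝ) : (rotM θ).det = 1 := by
  simp [rotM, det_fin_two, ← sq]

lemma det_reflM (β : ℝ) : (reflM β).det = -1 := by
  simp [reflM, det_fin_two, ← sq]
  linear_combination -Real.cos_sq_add_sin_sq (2 * β)

def zCoord (v : Fin 2 → ℂ) : ℂ := v 0 + I * v 1

def zbarCoord (v : Fin 2 → ℂ) : ℂ := v 0 - I * v 1

lemma zCoord_smul (c : ℂ) (v : Fin 2 → ℂ) : zCoord (c • v) = c * zCoord v := by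
  simp only [zCoord, Pi.smul_apply, smul_eq_mul]; ring

lemma zbarCoord_smul (c : ℂ) (v : Fin 2 → ℂ) : zbarCoord (c • v) = c * zbarCoord v := by
  simp only [zbarCoord, Pi.smul_apply, smul_eq_mul]; ring

lemma zCoord_rotM_mulVec (θ : ℝ) (v : Fin 2 → ℂ) :
    zCoord ((rotM θ).map ofReal *ᵥ v) = exp (θ * I) * zCoord v := by
  rw [exp_mul_I]
  simp [zCoord, rotM, mulVec, dotProduct, Fin.sum_univ_two]
  linear_combination (-(sin θ * v 1)) * I_sq

lemma zbarCoord_rotM_mulVec (θ : ℝ) (v : Fin 2 → ℂ) :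
    zbarCoord ((rotM θ).map ofReal *ᵥ v) = exp (-(θ * I)) * zbarCoord v := by
  rw [← neg_mul, exp_mul_I]
  simp [zbarCoord, rotM, mulVec, dotProduct, Fin.sum_univ_two]
  linear_combination (-(sin θ * v 1)) * I_sq

lemma zCoord_reflM_mulVec (β : ℝ) (v : Fin 2 → ℂ) :
    zCoord ((reflM β).map ofReal *ᵥ v) = exp (2 * β * I) * zbarCoord v := by
  rw [exp_mul_I]
  simp [zCoord, zbarCoord, reflM, mulVec, dotProduct, Fin.sum_univ_two]
  linear_combination sin (2 * β) * v 1 * I_sq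

lemma zbarCoord_reflM_mulVec (β : ℝ) (v : Fin 2 → ℂ) :
    zbarCoord ((reflM β).map ofReal *ᵥ v) = exp (-(2 * β * I)) * zCoord v := by
  rw [← neg_mul, exp_mul_I]
  simp [zCoord, zbarCoord, reflM, mulVec, dotProduct, Fin.sum_univ_two]
  linear_combination sin (2 * β) * v 1 * I_sq

lemma eq_zero_of_zCoord_eq_zero_of_zbarCoord_eq_zero {v : Fin 2 → ℂ} (h : zCoord v = 0)
    (h' : zbarCoord v = 0) : v = 0 := by
  unfold zCoord at h; unfold zbarCoord at h'
  have h0 : v 0 = 0 := by linear_combination (h + h') / 2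
  have h1 : v 1 = 0 := by linear_combination (h - h') * I / (-2) + v 1 * I_sq
  ext i; fin_cases i <;> assumption

lemma fourier_add_apply {T : ℝ} (n : ℤ) (x y : AddCircle T) :
    fourier n (x + y) = fourier n x * fourier n y := by
  simp only [fourier_apply, smul_add, AddCircle.toCircle_add, Circle.coe_mul]

lemma fourier_neg_apply {T : ℝ} (n : ℤ) (x : AddCircle T) :
    fourier n (-x) = fourier (-n) x := by
  simp only [fourier_apply, smul_neg, neg_smul]

lemma fourier_coe_div_pi (n : ℤ) (θ : ℝ) :
    fourier n ((θ / Real.pi : ℝ) : UnitAddCircle) = exp (n * θ * I) ^ 2 := by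
  have hπ : (Real.pi : ℂ) ≠ 0 := ofReal_ne_zero.mpr Real.pi_ne_zero
  rw [fourier_coe_apply, ← exp_nat_mul]
  congr 1
  push_cast
  field_simp

lemma eq_zero_of_ae_fourier_add_fourier_eq_const {T : ℝ} [Fact (0 < T)] {m n : ℤ} (hm : m ≠ 0)
    (hn : n ≠ 0) (hmn : m ≠ n) {a b c : ℂ}
    (h : ∀ᵐ y ∂AddCircle.haarAddCircle (T := T), a * fourier m y + b * fourier n y = c) :
    a = 0 ∧ b = 0 := by
  have hint : ∀ k : ℤ, Integrable (fourier (T := T) k) AddCircle.haarAddCircle := fun k =>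
    (map_continuous _).integrable_of_hasCompactSupport (HasCompactSupport.of_compactSpace _)
  have hcoeff : ∀ k, a * (Pi.single m 1 : ℤ → ℂ) k + b * (Pi.single n 1 : ℤ → ℂ) k =
      c * (Pi.single 0 1 : ℤ → ℂ) k := by
    intro k
    have hae : (fun y => a * fourier m y + b * fourier n y) =ᵐ[AddCircle.haarAddCircle (T := T)]
        fun y => c * fourier 0 y := by
      filter_upwards [h] with y hy
      rw [hy, fourier_zero, mul_one]
    have := congrFun (fourierCoeff_congr_ae hae) k
    rwa [← Pi.add_def, fourierCoeff.add ((hint m).const_mul a) ((hint n).const_mul b),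
      Pi.add_apply, fourierCoeff.const_mul, fourierCoeff.const_mul, fourierCoeff.const_mul,
      fourierCoeff_fourier, fourierCoeff_fourier, fourierCoeff_fourier] at this
  exact ⟨by simpa [hm, hmn] using hcoeff m, by simpa [hn, hmn.symm] using hcoeff n⟩

noncomputable def circleInvariant (N : Matrix (Fin 2) (Fin 2) ℂ) (y : UnitAddCircle) : ℂ :=
  (zbarCoord (N.col 0) ^ 2 * fourier 1 y - zCoord (N.col 0) ^ 2 * fourier (-1) y) / N.det

section CircleInvariant

variable {N M : Matrix (Fin 2) (Fin 2) ℂ} {c : ℂ}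

lemma circleInvariant_add_of_rotM_mul_eq_smul (θ : ℝ) (y : UnitAddCircle) (hN : N.det ≠ 0)
    (h : (rotM θ).map ofReal * N = c • M) :
    circleInvariant M (y + ↑(θ / Real.pi)) = circleInvariant N y := by
  have hdet := det_mul_det_of_mul_eq_smul h
  rw [det_map_ofReal, det_rotM, ofReal_one, one_mul] at hdet
  have hc : c ^ 2 ≠ 0 := left_ne_zero_of_mul (hdet ▸ hN)
  have hz := congrArg zCoord (mulVec_col_of_mul_eq_smul h 0)
  have hzbar := congrArg zbarCoord (mulVec_col_of_mul_eq_smul h 0)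
  rw [zCoord_rotM_mulVec, zCoord_smul] at hz
  rw [zbarCoord_rotM_mulVec, zbarCoord_smul] at hzbar
  have hE : exp (-(θ * I)) * exp (θ * I) = 1 := by rw [← exp_add, neg_add_cancel, exp_zero]
  rw [circleInvariant, circleInvariant, fourier_add_apply, fourier_add_apply, fourier_coe_div_pi,
    fourier_coe_div_pi, hdet, ← mul_div_mul_left _ M.det hc]
  congr 1
  push_cast
  simp only [one_mul, neg_mul]
  calc _ = (c * zbarCoord (M.col 0) * exp (θ * I)) ^ 2 * fourier 1 y
        - (c * zCoord (M.col 0) * exp (-(θ * I))) ^ 2 * fourier (-1) y := by ring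
    _ = (exp (-(θ * I)) * exp (θ * I)) ^ 2 * zbarCoord (N.col 0) ^ 2 * fourier 1 y
        - (exp (-(θ * I)) * exp (θ * I)) ^ 2 * zCoord (N.col 0) ^ 2 * fourier (-1) y := by
      rw [← hzbar, ← hz]; ring
    _ = _ := by rw [hE]; ring

lemma circleInvariant_sub_of_reflM_mul_eq_smul (β : ℝ) (y : UnitAddCircle) (hN : N.det ≠ 0)
    (h : (reflM β).map ofReal * N = c • M) :
    circleInvariant M (↑(2 * β / Real.pi) - y) = circleInvariant N y := by
  have hdet : N.det = c ^ 2 * (-M.det) := by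
    have := det_mul_det_of_mul_eq_smul h
    rw [det_map_ofReal, det_reflM, ofReal_neg, ofReal_one] at this
    linear_combination -this
  have hc : c ^ 2 ≠ 0 := left_ne_zero_of_mul (hdet ▸ hN)
  have hz := congrArg zCoord (mulVec_col_of_mul_eq_smul h 0)
  have hzbar := congrArg zbarCoord (mulVec_col_of_mul_eq_smul h 0)
  rw [zCoord_reflM_mulVec, zCoord_smul] at hz
  rw [zbarCoord_reflM_mulVec, zbarCoord_smul] at hzbar
  have hE : exp (-(2 * β * I)) * exp (2 * β * I) = 1 := by
    rw [← exp_add, neg_add_cancel, exp_zero]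
  rw [circleInvariant, circleInvariant, sub_eq_add_neg (_ : UnitAddCircle), fourier_add_apply,
    fourier_add_apply, fourier_neg_apply, fourier_neg_apply, fourier_coe_div_pi,
    fourier_coe_div_pi, hdet, ← neg_div_neg_eq, ← mul_div_mul_left _ (-M.det) hc]
  congr 1
  push_cast
  simp only [one_mul, neg_mul]
  calc _ = (c * zCoord (M.col 0) * exp (-(2 * β * I))) ^ 2 * fourier 1 y
        - (c * zbarCoord (M.col 0) * exp (2 * β * I)) ^ 2 * fourier (-1) y := by ring
    _ = (exp (-(2 * β * I)) * exp (2 * β * I)) ^ 2 * zbarCoord (N.col 0) ^ 2 * fourier 1 y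
        - (exp (-(2 * β * I)) * exp (2 * β * I)) ^ 2 * zCoord (N.col 0) ^ 2 * fourier (-1) y := by
      rw [← hzbar, ← hz]; ring
    _ = _ := by rw [hE]; ring

end CircleInvariant

section Ergodic

variable {X : Type*} [MeasurableSpace X] {μ : Measure X}

lemma ae_eq_zero_of_comp_eq_ite_neg {T : X → X} {Xr : Set X} [DecidablePred (· ∈ Xr)]
    {ν : Measure (ZMod 2)} [SFinite ν] (hν : ∀ a, ν {a} ≠ 0)
    {R : X × ZMod 2 → X × ZMod 2} (hR : ∀ x a, R (x, a) = (T x, if x ∈ Xr then a else a + 1))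
    (hRerg : Ergodic R (μ.prod ν)) {f : X → ℂ} (hf : Measurable f)
    (hflip : ∀ᵐ x ∂μ, f (T x) = if x ∈ Xr then f x else -f x) :
    f =ᵐ[μ] 0 := by
  set g : X × ZMod 2 → ℂ := fun z => if z.2 = 0 then f z.1 else -f z.1
  have hg : Measurable g :=
    .ite (measurable_snd (measurableSet_singleton 0)) (hf.comp measurable_fst)
      (hf.comp measurable_fst).neg
  have hgR : g ∘ R =ᵐ[μ.prod ν] g := by
    filter_upwards [Measure.quasiMeasurePreserving_fst.ae hflip] with ⟨x, a⟩ hx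
    have ha : ∀ a : ZMod 2, a + 1 = 0 ↔ a ≠ 0 := by decide
    by_cases hxr : x ∈ Xr <;> by_cases ha0 : a = 0 <;> simp [g, hR, hxr, ha0, ha, hx]
  obtain ⟨κ, hκ⟩ := hRerg.ae_eq_const_of_ae_eq_comp_ae hg.aestronglyMeasurable hgR
  filter_upwards [Measure.ae_ae_of_ae_prod hκ] with x hx
  rw [ae_iff_of_countable] at hx
  have h0 : f x = κ := by simpa [g] using hx 0 (hν 0)
  have h1 : -f x = κ := by simpa [g] using hx 1 (hν 1)
  exact self_eq_neg.mp (h0.trans h1.symm)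

lemma ae_eq_zero_of_fourier_invariant {T : ℝ} [Fact (0 < T)] {m n : ℤ} (hm : m ≠ 0)
    (hn : n ≠ 0) (hmn : m ≠ n) {S : X × AddCircle T → X × AddCircle T}
    (hS : Ergodic S (μ.prod AddCircle.haarAddCircle)) {a b : X → ℂ} (ha : Measurable a)
    (hb : Measurable b)
    (hinv : (fun z => a z.1 * fourier m z.2 + b z.1 * fourier n z.2) ∘ S
      =ᵐ[μ.prod AddCircle.haarAddCircle]
        fun z => a z.1 * fourier m z.2 + b z.1 * fourier n z.2) :
    ∀ᵐ x ∂μ, a x = 0 ∧ b x = 0 := by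
  have hG : Measurable fun z : X × AddCircle T => a z.1 * fourier m z.2 + b z.1 * fourier n z.2 :=
    ((ha.comp measurable_fst).mul ((map_continuous _).measurable.comp measurable_snd)).add
      ((hb.comp measurable_fst).mul ((map_continuous _).measurable.comp measurable_snd))
  obtain ⟨κ, hκ⟩ := hS.ae_eq_const_of_ae_eq_comp_ae hG.aestronglyMeasurable hinv
  filter_upwards [Measure.ae_ae_of_ae_prod hκ] with x hx
  exact eq_zero_of_ae_fourier_add_fourier_eq_const hm hn hmn hx

end Ergodic

lemma measurable_det_fin_two {X : Type*} [MeasurableSpace X] {C : X → Matrix (Fin 2) (Fin 2) ℂ}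
    (hC : ∀ i j, Measurable fun x => C x i j) : Measurable fun x => (C x).det := by
  simp only [det_fin_two]
  exact ((hC 0 0).mul (hC 1 1)).sub ((hC 0 1).mul (hC 1 0))

section Cocycle

variable {X : Type*} [MeasurableSpace X] {μ : Measure X} {T : X → X} {Xr : Set X}
  [DecidablePred (· ∈ Xr)] {α β : X → ℝ} {A : X → Matrix (Fin 2) (Fin 2) ℝ}
  {C : X → Matrix (Fin 2) (Fin 2) ℂ} {lam : X → ℂ}

lemma ae_transpose_mul_self_eq_zero_of_ergodic {ν : Measure (ZMod 2)} [SFinite ν]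
    (hν : ∀ a, ν {a} ≠ 0) (hAr : ∀ x ∈ Xr, A x = rotM (α x))
    (hAf : ∀ x ∉ Xr, A x = reflM (β x)) {R : X × ZMod 2 → X × ZMod 2}
    (hR : ∀ x a, R (x, a) = (T x, if x ∈ Xr then a else a + 1)) (herg : Ergodic R (μ.prod ν))
    (hCm : ∀ i j, Measurable fun x => C x i j) (hdet : ∀ x, (C x).det ≠ 0)
    (hrel : ∀ᵐ x ∂μ, (A x).map ofReal * C x = lam x • C (T x)) :
    ∀ᵐ x ∂μ, (C x)ᵀ * C x = 0 := by
  set g : X → Matrix (Fin 2) (Fin 2) ℂ := fun x => (C x).det⁻¹ • ((C x)ᵀ * C x)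
  have hflip : ∀ᵐ x ∂μ, g (T x) = if x ∈ Xr then g x else -g x := by
    filter_upwards [hrel] with x hx
    by_cases hxr : x ∈ Xr
    · rw [hAr x hxr] at hx
      simpa [g, hxr, det_map_ofReal, det_rotM] using inv_det_smul_gram_of_mul_eq_smul
        (transpose_mul_self_map_ofReal (rotM_transpose_mul_self _)) (hdet x) hx
    · rw [hAf x hxr] at hx
      simpa [g, hxr, det_map_ofReal, det_reflM] using inv_det_smul_gram_of_mul_eq_smul
        (transpose_mul_self_map_ofReal (reflM_transpose_mul_self _)) (hdet x) hx
  have hg : ∀ᵐ x ∂μ, g x = 0 := by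
    have hentry : ∀ i j, ∀ᵐ x ∂μ, g x i j = 0 := fun i j =>
      ae_eq_zero_of_comp_eq_ite_neg hν hR herg (by
          simp only [g, Matrix.smul_apply, smul_eq_mul, Matrix.mul_apply, transpose_apply,
            Fin.sum_univ_two]
          exact (measurable_det_fin_two hCm).inv.mul
            (((hCm 0 i).mul (hCm 0 j)).add ((hCm 1 i).mul (hCm 1 j))))
        (hflip.mono fun x hx => by split_ifs at hx with hxr <;> simp [hx, hxr])
    filter_upwards [ae_all_iff.mpr fun i => ae_all_iff.mpr (hentry i)] with x hx
    exact Matrix.ext hx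
  filter_upwards [hg] with x hx
  exact (smul_eq_zero.mp hx).resolve_left (inv_ne_zero (hdet x))

lemma ae_col_eq_zero_of_ergodic (hAr : ∀ x ∈ Xr, A x = rotM (α x))
    (hAf : ∀ x ∉ Xr, A x = reflM (β x)) {S : X × UnitAddCircle → X × UnitAddCircle}
    (hS : ∀ x y, S (x, y) =
      (T x, if x ∈ Xr then y + ↑(α x / Real.pi) else ↑(2 * β x / Real.pi) - y))
    (herg : Ergodic S (μ.prod volume)) (hCm : ∀ i j, Measurable fun x => C x i j)
    (hdet : ∀ x, (C x).det ≠ 0)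
    (hrel : ∀ᵐ x ∂μ, (A x).map ofReal * C x = lam x • C (T x)) :
    ∀ᵐ x ∂μ, (C x).col 0 = 0 := by
  have hvol : (volume : Measure UnitAddCircle) = AddCircle.haarAddCircle := by
    rw [AddCircle.volume_eq_smul_haarAddCircle, ENNReal.ofReal_one, one_smul]
  set a : X → ℂ := fun x => zbarCoord ((C x).col 0) ^ 2 / (C x).det
  set b : X → ℂ := fun x => -zCoord ((C x).col 0) ^ 2 / (C x).det
  have hG : (fun z : X × UnitAddCircle => circleInvariant (C z.1) z.2) =
      fun z => a z.1 * fourier 1 z.2 + b z.1 * fourier (-1) z.2 := by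
    ext z; simp only [circleInvariant, a, b]; ring
  have hinv : (fun z : X × UnitAddCircle => circleInvariant (C z.1) z.2) ∘ S
      =ᵐ[μ.prod volume] fun z => circleInvariant (C z.1) z.2 := by
    filter_upwards [Measure.quasiMeasurePreserving_fst.ae hrel] with ⟨x, y⟩ hx
    simp only [Function.comp_apply, hS]
    split_ifs with hxr
    · rw [hAr x hxr] at hx
      exact circleInvariant_add_of_rotM_mul_eq_smul _ y (hdet x) hx
    · rw [hAf x hxr] at hx
      exact circleInvariant_sub_of_reflM_mul_eq_smul _ y (hdet x) hx
  have hz : Measurable fun x => zCoord ((C x).col 0) :=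
    (hCm 0 0).add (measurable_const.mul (hCm 1 0))
  have hzbar : Measurable fun x => zbarCoord ((C x).col 0) :=
    (hCm 0 0).sub (measurable_const.mul (hCm 1 0))
  have ha : Measurable a := (hzbar.pow_const 2).div (measurable_det_fin_two hCm)
  have hb : Measurable b := (hz.pow_const 2).neg.div (measurable_det_fin_two hCm)
  rw [hG, hvol] at hinv
  filter_upwards [ae_eq_zero_of_fourier_invariant one_ne_zero (by norm_num) (by norm_num)
    (hvol ▸ herg) ha hb hinv] with x ⟨hax, hbx⟩
  simp only [a, b, div_eq_zero_iff, neg_eq_zero, pow_eq_zero_iff two_ne_zero, hdet x,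
    or_false] at hax hbx
  exact eq_zero_of_zCoord_eq_zero_of_zbarCoord_eq_zero hbx hax

end Cocycle

open Classical in
theorem stmt2_general
    {X : Type*} [MeasurableSpace X] (μ : Measure X) [IsProbabilityMeasure μ]
    (T : X → X)
    (Xr : Set X)
    (α β : X → ℝ)
    (A : X → Matrix (Fin 2) (Fin 2) ℝ)
    (hAr : ∀ x ∈ Xr, A x = rotM (α x))
    (hAf : ∀ x ∉ Xr, A x = reflM (β x))
    (S : X × UnitAddCircle → X × UnitAddCircle)
    (hS : ∀ x y, S (x, y) =
      (T x, if x ∈ Xr then y + ↑(α x / Real.pi) else ↑(2 * β x / Real.pi) - y))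
    (R : X × ZMod 2 → X × ZMod 2)
    (hR : ∀ x a, R (x, a) = (T x, if x ∈ Xr then a else a + 1))
    (herg : Ergodic S (μ.prod (volume : Measure UnitAddCircle)) ∨
      Ergodic R (μ.prod ((2 : ENNReal)⁻¹ • (Measure.count : Measure (ZMod 2))))) :
    ¬ ∃ (C : X → Matrix (Fin 2) (Fin 2) ℂ) (lam : X → ℂ),
      (∀ i j, Measurable fun x => C x i j) ∧ Measurable lam ∧
      (∀ x, IsUnit (C x)) ∧
      (∀ᵐ x ∂μ, (C (T x))⁻¹ * ((A x).map Complex.ofReal) * C x = lam x • 1) := by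
  rintro ⟨C, lam, hCm, -, hCu, hcoh⟩
  have hdet : ∀ x, (C x).det ≠ 0 := fun x => ((C x).isUnit_iff_isUnit_det.mp (hCu x)).ne_zero
  have hrel : ∀ᵐ x ∂μ, (A x).map ofReal * C x = lam x • C (T x) := hcoh.mono fun x hx =>
    mul_eq_smul_of_inv_mul_mul_eq_smul ((C (T x)).isUnit_iff_isUnit_det.mp (hCu _)) hx
  rcases herg with hSerg | hRerg
  · obtain ⟨x, hx⟩ := (ae_col_eq_zero_of_ergodic hAr hAf hS hSerg hCm hdet hrel).exists
    exact hdet x (det_eq_zero_of_column_eq_zero 0 fun i => congrFun hx i)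
  · obtain ⟨x, hx⟩ :=
      (ae_transpose_mul_self_eq_zero_of_ergodic (by simp) hAr hAf hR hRerg hCm hdet hrel).exists
    have := congrArg det hx
    rw [det_mul, det_transpose, det_zero] at this
    exact hdet x (mul_self_eq_zero.mp this)

open Classical in
/-- If at least one of the skew products `R` or `S` is ergodic, then the cocycle `A` is not
cohomologous to a scalar multiple of the identity. -/
theorem stmt2
    {X : Type*} [MeasurableSpace X] (μ : Measure X) [IsProbabilityMeasure μ]
    (T T' : X → X) (hT : Ergodic T μ)
    (hT'meas : MeasurePreserving T' μ μ)
    (hTinv : Function.LeftInverse T' T) (hTinv' : Function.RightInverse T' T)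
    (Xr : Set X) (hXr : MeasurableSet Xr)
    (α β : X → ℝ) (hα : Measurable α) (hβ : Measurable β)
    (A : X → Matrix (Fin 2) (Fin 2) ℝ) (hAmeas : ∀ i j, Measurable fun x => A x i j)
    (hAr : ∀ x ∈ Xr, A x = rotM (α x))
    (hAf : ∀ x ∉ Xr, A x = reflM (β x))
    (S : X × UnitAddCircle → X × UnitAddCircle)
    (hS : ∀ x y, S (x, y) =
      (T x, if x ∈ Xr then y + ↑(α x / Real.pi) else ↑(2 * β x / Real.pi) - y))
    (R : X × ZMod 2 → X × ZMod 2)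
    (hR : ∀ x a, R (x, a) = (T x, if x ∈ Xr then a else a + 1))
    (herg : Ergodic S (μ.prod (volume : Measure UnitAddCircle)) ∨
      Ergodic R (μ.prod ((2 : ENNReal)⁻¹ • (Measure.count : Measure (ZMod 2))))) :
    ¬ ∃ (C : X → Matrix (Fin 2) (Fin 2) ℂ) (lam : X → ℂ),
      (∀ i j, Measurable fun x => C x i j) ∧ Measurable lam ∧
      (∀ x, IsUnit (C x)) ∧
      (∀ᵐ x ∂μ, (C (T x))⁻¹ * ((A x).map Complex.ofReal) * C x = lam x • 1) :=
  stmt2_general μ T Xr α β A hAr hAf S hS R hR herg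
end

section
/- Suppose w : X → ℂ ∪ {∞} is measurable and its graph is invariant under N, i.e., N(x, w(x)) = (T x, w(T x)) for μ-a.e. x. Then there exists a constant C ∈ [0,1] such that for μ-a.e. x, |w(x)| ∈ {C, 1/C} (with the conventions |∞| = ∞, 1/0 = ∞). Moreover, for every C ∈ [0,1], the set X × P_C, where P_C = {z ∈ ℂ ∪ {∞} : |z| = C or |z| = 1/C}, is invariant under N up to a μ-null set of x-fibres. -/
/-
On each fibre `N` multiplies by a unimodular scalar, possibly after `z ↦ 1/z`, so it either
preserves `|z|` or inverts it; this is already the second claim. Along an `N`-invariant graph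
the function `min |w x| |w x|⁻¹` is therefore a.e. `T`-invariant, hence a.e. equal to a
constant `C ≤ 1` by ergodicity, and then `|w x| ∈ {C, C⁻¹}`.
-/

open MeasureTheory Matrix

noncomputable instance : MeasurableSpace (OnePoint ℂ) := borel _

/-- The modulus on `ℂ ∪ {∞}`, with values in `[0,∞]` and the convention `|∞| = ∞`. -/
noncomputable def opAbs (z : OnePoint ℂ) : ENNReal :=
  Option.elim (α := ℂ) z ⊤ fun w => (‖w‖₊ : ENNReal)

/-- Multiplication of a point of `ℂ ∪ {∞}` by a complex scalar, with `c · ∞ = ∞`. -/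
noncomputable def opSmul (c : ℂ) : OnePoint ℂ → OnePoint ℂ :=
  OnePoint.map (fun w => c * w)

open Classical in
/-- Inversion `z ↦ 1/z` on `ℂ ∪ {∞}`, with the conventions `1/0 = ∞` and `1/∞ = 0`. -/
noncomputable def opInv (z : OnePoint ℂ) : OnePoint ℂ :=
  if z = OnePoint.infty then ((0 : ℂ) : OnePoint ℂ)
  else if z = ((0 : ℂ) : OnePoint ℂ) then OnePoint.infty
  else OnePoint.map (fun w => w⁻¹) z

instance : BorelSpace (OnePoint ℂ) := ⟨rfl⟩

@[simp]
lemma opAbs_infty : opAbs OnePoint.infty = ⊤ := rfl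

@[simp]
lemma opAbs_coe (w : ℂ) : opAbs w = ‖w‖₊ := rfl

lemma opAbs_eq_extend :
    opAbs = Function.extend ((↑) : ℂ → OnePoint ℂ) (fun w => (‖w‖₊ : ENNReal)) fun _ => ⊤ := by
  funext z
  cases z with
  | infty =>
    rw [Function.extend_apply' _ _ _ fun ⟨w, hw⟩ => OnePoint.coe_ne_infty w hw, opAbs_infty]
  | coe w => rw [OnePoint.coe_injective.extend_apply, opAbs_coe]

lemma measurable_opAbs : Measurable opAbs := by
  rw [opAbs_eq_extend]
  exact OnePoint.isOpenEmbedding_coe.measurableEmbedding.measurable_extend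
    (by fun_prop) measurable_const

lemma opAbs_opSmul {c : ℂ} (hc : ‖c‖ = 1) (z : OnePoint ℂ) : opAbs (opSmul c z) = opAbs z := by
  cases z with
  | infty => rfl
  | coe w =>
    have hc' : ‖c‖₊ = 1 := NNReal.eq hc
    change ((‖c * w‖₊ : NNReal) : ENNReal) = ‖w‖₊
    rw [nnnorm_mul, hc', one_mul]

lemma opAbs_opInv (z : OnePoint ℂ) : opAbs (opInv z) = (opAbs z)⁻¹ := by
  cases z with
  | infty => simp [opInv]
  | coe w =>
    by_cases hw : w = 0
    · simp [opInv, hw]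
    · have hw' : (w : OnePoint ℂ) ≠ ((0 : ℂ) : OnePoint ℂ) := by
        simpa [OnePoint.coe_eq_coe] using hw
      rw [opInv, if_neg (OnePoint.coe_ne_infty w), if_neg hw']
      change ((‖w⁻¹‖₊ : NNReal) : ENNReal) = (‖w‖₊ : ENNReal)⁻¹
      rw [nnnorm_inv, ENNReal.coe_inv (nnnorm_ne_zero_iff.2 hw)]

lemma opAbs_ite_opSmul_eq_or_eq_inv (p : Prop) [Decidable p] {c d : ℂ} (hc : ‖c‖ = 1)
    (hd : ‖d‖ = 1) (z : OnePoint ℂ) :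
    opAbs (if p then opSmul c z else opSmul d (opInv z)) = opAbs z ∨
      opAbs (if p then opSmul c z else opSmul d (opInv z)) = (opAbs z)⁻¹ := by
  split_ifs
  · exact Or.inl (opAbs_opSmul hc z)
  · exact Or.inr ((opAbs_opSmul hd _).trans (opAbs_opInv z))

lemma eq_or_eq_inv_of_eq_or_eq_inv {G : Type*} [InvolutiveInv G] {a b c : G}
    (hab : b = a ∨ b = a⁻¹) (hac : a = c ∨ a = c⁻¹) : b = c ∨ b = c⁻¹ := by
  rcases hab with rfl | rfl <;> rcases hac with rfl | rfl <;> simp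

namespace ENNReal

lemma min_inv_le_one (a : ENNReal) : min a a⁻¹ ≤ 1 := by
  rcases le_total a 1 with ha | ha
  · exact (min_le_left _ _).trans ha
  · exact (min_le_right _ _).trans (ENNReal.inv_le_one.2 ha)

lemma min_inv_inv (a : ENNReal) : min a⁻¹ a⁻¹⁻¹ = min a a⁻¹ := by
  rw [inv_inv, min_comm]

lemma eq_min_inv_or_eq_inv_min_inv (a : ENNReal) : a = min a a⁻¹ ∨ a = (min a a⁻¹)⁻¹ := by
  rcases min_choice a a⁻¹ with h | h <;> rw [h] <;> simp

end ENNReal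

lemma Ergodic.exists_ae_eq_or_eq_inv {X : Type*} [MeasurableSpace X] {μ : Measure X}
    {T : X → X} (hT : Ergodic T μ) {g : X → ENNReal} (hg : Measurable g)
    (hgT : ∀ᵐ x ∂μ, g (T x) = g x ∨ g (T x) = (g x)⁻¹) :
    ∃ C : ENNReal, C ≤ 1 ∧ ∀ᵐ x ∂μ, g x = C ∨ g x = C⁻¹ := by
  set m : X → ENNReal := fun x => min (g x) (g x)⁻¹
  have hm_inv : m ∘ T =ᵐ[μ] m := by
    filter_upwards [hgT] with x hx
    rcases hx with hx | hx
    · simp only [Function.comp_apply, m, hx]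
    · simp only [Function.comp_apply, m, hx, ENNReal.min_inv_inv]
  obtain ⟨c, hc⟩ := hT.ae_eq_const_of_ae_eq_comp₀ (hg.min hg.inv).nullMeasurable hm_inv
  -- `min c 1` rather than `c`, since `c` is arbitrary when `μ = 0`.
  refine ⟨min c 1, min_le_right _ _, ?_⟩
  filter_upwards [hc] with x hx
  have hmc : m x = c := hx
  have hmx : m x = min c 1 := by
    rw [hmc, min_eq_left (hmc ▸ ENNReal.min_inv_le_one (g x))]
  rw [← hmx]
  exact ENNReal.eq_min_inv_or_eq_inv_min_inv (g x)

open Classical in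
theorem stmt3_general
    {X : Type*} [MeasurableSpace X] (μ : Measure X)
    (T : X → X) (hT : Ergodic T μ)
    (Xr : Set X)
    (α β : X → ℝ)
    (N : X × OnePoint ℂ → X × OnePoint ℂ)
    (hN : ∀ x z, N (x, z) =
      (T x, if x ∈ Xr then opSmul (Complex.exp (2 * (α x) * Complex.I)) z
        else opSmul (Complex.exp (4 * (β x) * Complex.I)) (opInv z)))
    (w : X → OnePoint ℂ) (hw : Measurable w)
    (hgraph : ∀ᵐ x ∂μ, N (x, w x) = (T x, w (T x))) :
    (∃ C : ENNReal, C ≤ 1 ∧ ∀ᵐ x ∂μ, opAbs (w x) = C ∨ opAbs (w x) = C⁻¹) ∧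
    (∀ C : ENNReal, C ≤ 1 → ∀ᵐ x ∂μ, ∀ z : OnePoint ℂ,
      (opAbs z = C ∨ opAbs z = C⁻¹) →
      (opAbs (N (x, z)).2 = C ∨ opAbs (N (x, z)).2 = C⁻¹)) := by
  have hN_abs : ∀ x z, opAbs (N (x, z)).2 = opAbs z ∨ opAbs (N (x, z)).2 = (opAbs z)⁻¹ := by
    intro x z
    rw [hN]
    exact opAbs_ite_opSmul_eq_or_eq_inv _
      (by exact_mod_cast Complex.norm_exp_ofReal_mul_I (2 * α x))
      (by exact_mod_cast Complex.norm_exp_ofReal_mul_I (4 * β x)) z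
  refine ⟨hT.exists_ae_eq_or_eq_inv (measurable_opAbs.comp hw) ?_,
    fun C _ => ae_of_all μ fun x z hz => eq_or_eq_inv_of_eq_or_eq_inv (hN_abs x z) hz⟩
  filter_upwards [hgraph] with x hx
  simpa only [hx] using hN_abs x (w x)

open Classical in
/-- If `w : X → ℂ ∪ {∞}` is measurable and its graph is invariant under `N`, then there is a
constant `C ∈ [0,1]` such that for a.e. `x`, `|w(x)| ∈ {C, 1/C}`; moreover, for every
`C ∈ [0,1]` the set `X × P_C` is invariant under `N` up to a null set of `x`-fibres. -/
theorem stmt3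
    {X : Type*} [MeasurableSpace X] (μ : Measure X) [IsProbabilityMeasure μ]
    (T T' : X → X) (hT : Ergodic T μ)
    (hT'meas : MeasurePreserving T' μ μ)
    (hTinv : Function.LeftInverse T' T) (hTinv' : Function.RightInverse T' T)
    (Xr : Set X) (hXr : MeasurableSet Xr)
    (α β : X → ℝ) (hα : Measurable α) (hβ : Measurable β)
    (A : X → Matrix (Fin 2) (Fin 2) ℝ) (hAmeas : ∀ i j, Measurable fun x => A x i j)
    (hAr : ∀ x ∈ Xr, A x = rotM (α x))
    (hAf : ∀ x ∉ Xr, A x = reflM (β x))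
    (N : X × OnePoint ℂ → X × OnePoint ℂ)
    (hN : ∀ x z, N (x, z) =
      (T x, if x ∈ Xr then opSmul (Complex.exp (2 * (α x) * Complex.I)) z
        else opSmul (Complex.exp (4 * (β x) * Complex.I)) (opInv z)))
    (w : X → OnePoint ℂ) (hw : Measurable w)
    (hgraph : ∀ᵐ x ∂μ, N (x, w x) = (T x, w (T x))) :
    (∃ C : ENNReal, C ≤ 1 ∧ ∀ᵐ x ∂μ, opAbs (w x) = C ∨ opAbs (w x) = C⁻¹) ∧
    (∀ C : ENNReal, C ≤ 1 → ∀ᵐ x ∂μ, ∀ z : OnePoint ℂ,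
      (opAbs z = C ∨ opAbs z = C⁻¹) →
      (opAbs (N (x, z)).2 = C ∨ opAbs (N (x, z)).2 = C⁻¹)) :=
  stmt3_general μ T hT Xr α β N hN w hw hgraph
end

section
/- For the cocycle generated by A(x) = rot_{πx} over the irrational rotation T(x) = x + η on 𝕋, the trivial bundle 𝕋×ℂ² is reducible but 𝕋×ℝ² is irreducible. Precisely: (i) A(x)·(1, i)ᵀ = e^{−iπx}·(1, i)ᵀ for every x, so the constant map v(x) = (1, i) is a measurable equivariant family of one-dimensional complex subspaces; (ii) there is no measurable map v : 𝕋 → ℝ² with v(x) ≠ 0 for a.e. x and A(x)·v(x) ∈ span_ℝ{v(x + η)} for a.e. x. -/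
open MeasureTheory Matrix

/-- The canonical representative in `[0,1)` of a point of `𝕋 = ℝ/ℤ`. -/
noncomputable def rep (x : UnitAddCircle) : ℝ := ((AddCircle.equivIco 1 0) x : ℝ)

/-!
Identify `ℝ²` with `ℂ`, so that `rot_θ` becomes multiplication by `e^{iθ}` and `(1, i)` spans a
common complex eigenline. A real line `ℝ z` is recorded by `z / z̄ = (z / |z|)²`, which is
insensitive to real scalars; an equivariant family of real lines `v` thus yields a measurable
`f : 𝕋 → S¹` with `f (x + η) = e^{2πix} f x`. Translation preserves the moduli of the Fourier
coefficients and multiplication by `e^{2πix}` shifts them by one, so `|f̂ n|` is constant, which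
contradicts Parseval's `∑ |f̂ n|² = ‖f‖₂² = 1`.
-/

open AddCircle Complex ComplexConjugate Filter
open scoped Real

theorem Function.Periodic.eq_zero_of_summable {E : Type*} [AddCommGroup E] [TopologicalSpace E]
    [IsTopologicalAddGroup E] [T2Space E] {s : ℤ → E} {c : ℤ}
    (hs : Summable s) (hp : Function.Periodic s c) (hc : c ≠ 0) : s = 0 := by
  funext n
  have hinj : Function.Injective fun k : ℕ => n + k * c := fun k l hkl => by
    simpa [hc] using hkl
  have hlim : Tendsto (fun k : ℕ => s (n + k * c)) atTop (nhds 0) :=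
    hs.tendsto_cofinite_zero.comp (Nat.cofinite_eq_atTop ▸ hinj.tendsto_cofinite)
  rw [show (fun k : ℕ => s (n + k * c)) = fun _ => s n from funext fun k => hp.nat_mul k n]
    at hlim
  exact tendsto_const_nhds_iff.mp hlim

section FourierCoeff

variable {T : ℝ} [Fact (0 < T)] {E : Type*} [NormedAddCommGroup E] [NormedSpace ℂ E]

theorem fourierCoeff_comp_add (f : AddCircle T → E) (a : AddCircle T) (n : ℤ) :
    fourierCoeff (fun x => f (x + a)) n = fourier n a • fourierCoeff f n := by
  have hshift (x : AddCircle T) : fourier (-n) x • f (x + a) =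
      fourier n a • (fourier (-n) (x + a) • f (x + a)) := by
    simp only [smul_smul, fourier_apply, smul_add, toCircle_add, neg_smul, toCircle_neg]
    rw [← Circle.coe_mul, mul_left_comm, mul_inv_cancel, mul_one]
  simp only [fourierCoeff, hshift, integral_smul,
    integral_add_right_eq_self (fun y => fourier (-n) y • f y) a]

theorem fourierCoeff_fourier_smul (f : AddCircle T → E) (m n : ℤ) :
    fourierCoeff (fun x => fourier m x • f x) n = fourierCoeff f (n - m) := by
  simp only [fourierCoeff, smul_smul, ← fourier_add, neg_add_eq_sub, neg_sub]

theorem not_ae_comp_add_eq_fourier_mul {f : AddCircle T → ℂ}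
    (hf : AEStronglyMeasurable f haarAddCircle) (hf1 : ∀ᵐ x ∂haarAddCircle, ‖f x‖ = 1)
    (a : AddCircle T) {m : ℤ} (hm : m ≠ 0) :
    ¬ ∀ᵐ x ∂haarAddCircle, f (x + a) = fourier m x * f x := by
  intro hcoh
  have hperiodic : Function.Periodic (fun n => ‖fourierCoeff f n‖ ^ 2) (-m) := fun n => by
    have hmul := fourierCoeff_fourier_smul f m n
    simp only [smul_eq_mul] at hmul
    dsimp only
    rw [← sub_eq_add_neg, ← hmul, ← fourierCoeff_congr_ae hcoh,
      fourierCoeff_comp_add, norm_smul, fourier_apply, Circle.norm_coe, one_mul]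
  have hL2 : MemLp f 2 haarAddCircle := .of_bound hf 1 (hf1.mono fun x hx => hx.le)
  have hparseval := hasSum_sq_fourierCoeff hL2.toLp
  rw [fourierCoeff_congr_ae hL2.coeFn_toLp] at hparseval
  have hnorm : ∫ x, ‖hL2.toLp f x‖ ^ 2 ∂haarAddCircle = 1 := by
    rw [integral_congr_ae (g := fun _ => 1)]
    · simp
    filter_upwards [hL2.coeFn_toLp, hf1] with x hx hx1
    simp [hx, hx1]
  rw [hnorm, hperiodic.eq_zero_of_summable hparseval.summable (neg_ne_zero.mpr hm)] at hparseval
  exact one_ne_zero (hparseval.unique hasSum_zero)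

end FourierCoeff

def vecToComplex (u : Fin 2 → ℝ) : ℂ := u 0 + u 1 * I

theorem continuous_vecToComplex : Continuous vecToComplex := by
  unfold vecToComplex; fun_prop

theorem vecToComplex_smul (c : ℝ) (u : Fin 2 → ℝ) :
    vecToComplex (c • u) = c * vecToComplex u := by
  simp only [vecToComplex, Pi.smul_apply, smul_eq_mul, ofReal_mul]; ring

theorem vecToComplex_ne_zero {u : Fin 2 → ℝ} (hu : u ≠ 0) : vecToComplex u ≠ 0 := by
  contrapose! hu
  simpa [vecToComplex, Complex.ext_iff, funext_iff, Fin.forall_fin_two] using hu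

theorem vecToComplex_rotM_mulVec (θ : ℝ) (u : Fin 2 → ℝ) :
    vecToComplex (rotM θ *ᵥ u) = exp (θ * I) * vecToComplex u := by
  simp only [vecToComplex, rotM, mulVec, dotProduct, Fin.sum_univ_two, of_apply, cons_val',
    cons_val_fin_one, cons_val_zero, cons_val_one, exp_mul_I]
  push_cast
  linear_combination -(sin θ * u 1) * I_sq

noncomputable def phaseSq (z : ℂ) : ℂ := z / conj z

theorem measurable_phaseSq : Measurable phaseSq :=
  measurable_id.div continuous_conj.measurable

theorem norm_phaseSq {z : ℂ} (hz : z ≠ 0) : ‖phaseSq z‖ = 1 := by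
  rw [phaseSq, norm_div, RCLike.norm_conj, div_self (norm_ne_zero_iff.mpr hz)]

theorem phaseSq_ofReal_mul {c : ℝ} (hc : c ≠ 0) (z : ℂ) : phaseSq (c * z) = phaseSq z := by
  rw [phaseSq, phaseSq, map_mul, conj_ofReal, mul_div_mul_left _ _ (ofReal_ne_zero.mpr hc)]

theorem phaseSq_exp_mul_I_mul (θ : ℝ) (z : ℂ) :
    phaseSq (exp (θ * I) * z) = exp (2 * θ * I) * phaseSq z := by
  have hconj : conj (exp (θ * I)) = (exp (θ * I))⁻¹ := by
    rw [← exp_conj, map_mul, conj_ofReal, conj_I, ← exp_neg]; ring_nf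
  have hsq : exp (2 * θ * I) = exp (θ * I) * exp (θ * I) := by rw [← exp_add]; ring_nf
  rw [phaseSq, phaseSq, map_mul, hconj, hsq, div_eq_mul_inv, div_eq_mul_inv, mul_inv, inv_inv]
  ring

theorem phaseSq_vecToComplex_of_rotM_mulVec_mem_span {θ : ℝ} {u u' : Fin 2 → ℝ} (hu : u ≠ 0)
    (h : rotM θ *ᵥ u ∈ Submodule.span ℝ {u'}) :
    phaseSq (vecToComplex u') = exp (2 * θ * I) * phaseSq (vecToComplex u) := by
  obtain ⟨c, hc⟩ := Submodule.mem_span_singleton.mp h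
  have hrot : c * vecToComplex u' = exp (θ * I) * vecToComplex u := by
    rw [← vecToComplex_smul, hc, vecToComplex_rotM_mulVec]
  have hc0 : c ≠ 0 := by
    rintro rfl
    simp [exp_ne_zero, vecToComplex_ne_zero hu] at hrot
  rw [← phaseSq_ofReal_mul hc0, hrot, phaseSq_exp_mul_I_mul]

theorem rotM_map_ofReal_mulVec_one_I (θ : ℝ) :
    (rotM θ).map ofReal *ᵥ ![1, I] = exp (-θ * I) • ![1, I] := by
  rw [← ofReal_neg, exp_mul_I, ← ofReal_cos, ← ofReal_sin, Real.cos_neg, Real.sin_neg]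
  ext i
  fin_cases i <;> simp [rotM, mulVec, dotProduct, Fin.sum_univ_two]
  linear_combination sin (θ : ℂ) * I_sq

theorem fourier_one_eq_exp_rep (x : UnitAddCircle) :
    fourier 1 x = exp (2 * (π * rep x : ℝ) * I) := by
  conv_lhs => rw [← coe_equivIco (a := 0) (y := x), fourier_coe_apply]
  push_cast [rep]
  ring_nf

theorem stmt4_general (η : ℝ)
    (T : UnitAddCircle → UnitAddCircle) (hT : ∀ x, T x = x + ↑η)
    (A : UnitAddCircle → Matrix (Fin 2) (Fin 2) ℝ)
    (hA : ∀ x, A x = rotM (Real.pi * rep x)) :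
    (∀ x, ((A x).map Complex.ofReal).mulVec ![1, Complex.I] =
        Complex.exp (-(Real.pi * rep x) * Complex.I) • ![1, Complex.I]) ∧
    (∀ x, ((A x).map Complex.ofReal).mulVec ![1, Complex.I] ∈
        Submodule.span ℂ {![1, Complex.I]}) ∧
    ¬ ∃ v : UnitAddCircle → (Fin 2 → ℝ), Measurable v ∧
        (∀ᵐ x ∂(volume : Measure UnitAddCircle), v x ≠ 0) ∧
        (∀ᵐ x ∂(volume : Measure UnitAddCircle),
          (A x).mulVec (v x) ∈ Submodule.span ℝ {v (T x)}) := by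
  have eigen (x : UnitAddCircle) : ((A x).map ofReal).mulVec ![1, I] =
      exp (-(π * rep x) * I) • ![1, I] := by
    rw [hA, rotM_map_ofReal_mulVec_one_I]; push_cast; rfl
  refine ⟨eigen, fun x => eigen x ▸ Submodule.smul_mem _ _ (Submodule.mem_span_singleton_self _),
    ?_⟩
  rintro ⟨v, hv, hv0, hequiv⟩
  have hvol : (volume : Measure UnitAddCircle) = haarAddCircle := by
    simp [volume_eq_smul_haarAddCircle]
  rw [hvol] at hv0 hequiv
  refine not_ae_comp_add_eq_fourier_mul (f := fun x => phaseSq (vecToComplex (v x)))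
    (measurable_phaseSq.comp (continuous_vecToComplex.measurable.comp hv)).aestronglyMeasurable
    (hv0.mono fun x hx => norm_phaseSq (vecToComplex_ne_zero hx)) η one_ne_zero ?_
  filter_upwards [hv0, hequiv] with x hx hxequiv
  rw [hA, hT] at hxequiv
  rw [phaseSq_vecToComplex_of_rotM_mulVec_mem_span hx hxequiv, fourier_one_eq_exp_rep]

/-- For the cocycle generated by `A(x) = rot_{πx}` over the irrational rotation `T(x) = x + η`:
(i) `A(x)·(1,i)ᵀ = e^{-iπx}·(1,i)ᵀ` for every `x`, so the constant map `v(x) = (1,i)` is an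
equivariant family of one-dimensional complex subspaces (hence `𝕋 × ℂ²` is reducible);
(ii) there is no equivariant family of one-dimensional real subspaces (so `𝕋 × ℝ²` is
irreducible). -/
theorem stmt4 (η : ℝ) (hη : Irrational η)
    (T : UnitAddCircle → UnitAddCircle) (hT : ∀ x, T x = x + ↑η)
    (A : UnitAddCircle → Matrix (Fin 2) (Fin 2) ℝ)
    (hA : ∀ x, A x = rotM (Real.pi * rep x)) :
    (∀ x, ((A x).map Complex.ofReal).mulVec ![1, Complex.I] =
        Complex.exp (-(Real.pi * rep x) * Complex.I) • ![1, Complex.I]) ∧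
    (∀ x, ((A x).map Complex.ofReal).mulVec ![1, Complex.I] ∈
        Submodule.span ℂ {![1, Complex.I]}) ∧
    ¬ ∃ v : UnitAddCircle → (Fin 2 → ℝ), Measurable v ∧
        (∀ᵐ x ∂(volume : Measure UnitAddCircle), v x ≠ 0) ∧
        (∀ᵐ x ∂(volume : Measure UnitAddCircle),
          (A x).mulVec (v x) ∈ Submodule.span ℝ {v (T x)}) :=
  stmt4_general η T hT A hA
end

section
/- Suppose σ : 𝕋 → 𝕋 is measure-preserving and ergodic with respect to Lebesgue measure, f : 𝕋 → ℤ is measurable, and α is irrational. Define T_f : 𝕋² → 𝕋² by T_f(x, y) = (σ(x), y + α·f(x) mod 1), and define T̃_f : 𝕋×ℤ → 𝕋×ℤ by T̃_f(x, n) = (σ(x), n + f(x)). If T̃_f is ergodic with respect to the σ-finite measure λ×c, then T_f is ergodic with respect to Lebesgue measure λ×λ on 𝕋². -/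
/-!
Let `s ⊆ 𝕋²` be `T_f`-invariant. For each `y`, the map `(x, n) ↦ (x, y + nα)` intertwines `T̃_f`
with `T_f`, so `{(x, n) | (x, y + nα) ∈ s}` is `T̃_f`-invariant; by ergodicity of `T̃_f` the
fibres of `s` over the orbit `y + ℤα` are either all null or all conull. Hence the set of `y`
whose fibre is null is invariant under the irrational rotation `y ↦ y + α`, so it is null or
conull, and Fubini transfers this dichotomy to `s`.
-/

open MeasureTheory Function Filter Set

namespace MeasureTheory.Measure

variable {X Y : Type*} [MeasurableSpace X] [MeasurableSpace Y] {μ : Measure X} [SFinite μ]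

theorem prod_null_of_ae_fiber_null {ν : Measure Y} [SFinite ν] {s : Set (X × Y)}
    (hs : MeasurableSet s) (h : ∀ᵐ y ∂ν, μ ((·, y) ⁻¹' s) = 0) : μ.prod ν s = 0 := by
  rw [prod_apply_symm hs]
  exact (lintegral_congr_ae h).trans lintegral_zero

theorem prod_count_eq_zero_iff {ι : Type*} [MeasurableSpace ι] [Countable ι]
    [MeasurableSingletonClass ι] {B : Set (X × ι)} (hB : MeasurableSet B) :
    μ.prod count B = 0 ↔ ∀ n, μ ((·, n) ⁻¹' B) = 0 := by
  rw [prod_apply_symm hB, lintegral_count, ENNReal.tsum_eq_zero]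

end MeasureTheory.Measure

section SkewProduct

variable {X G : Type*} [AddGroup G]
  {σ : X → X} {c : X → ℤ} {a : G} {T : X × G → X × G} {T' : X × ℤ → X × ℤ}

theorem semiconj_prodMap_add_zsmul (hT : ∀ x y, T (x, y) = (σ x, y + c x • a))
    (hT' : ∀ x n, T' (x, n) = (σ x, n + c x)) (y : G) :
    Semiconj (Prod.map id fun n : ℤ => y + n • a) T' T := by
  rintro ⟨x, n⟩
  simp [hT, hT', add_zsmul, add_assoc]

variable [MeasurableSpace X] {μ : Measure X}

theorem preimage_add_setOf_fiber_null [NeZero μ] {s : Set (X × G)}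
    (h : ∀ y, (∀ n : ℤ, μ ((·, y + n • a) ⁻¹' s) = 0) ∨
      ∀ n : ℤ, μ ((·, y + n • a) ⁻¹' sᶜ) = 0) :
    (· + a) ⁻¹' {y | μ ((·, y) ⁻¹' s) = 0} = {y | μ ((·, y) ⁻¹' s) = 0} := by
  have not_both : ∀ y, μ ((·, y) ⁻¹' sᶜ) = 0 → μ ((·, y) ⁻¹' s) ≠ 0 := by
    intro y hc h0
    have := measure_union_null h0 hc
    rw [← preimage_union, union_compl_self, preimage_univ, Measure.measure_univ_eq_zero] at this
    exact NeZero.ne μ this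
  ext y
  rcases h y with hn | hn <;>
  · have h₀ := hn 0
    have h₁ := hn 1
    simp only [zero_zsmul, add_zero, one_zsmul] at h₀ h₁
    simp_all

variable [MeasurableSpace G] [SFinite μ]

theorem fiber_null_or_conull_along_orbit (herg : PreErgodic T' (μ.prod Measure.count))
    (hT : ∀ x y, T (x, y) = (σ x, y + c x • a)) (hT' : ∀ x n, T' (x, n) = (σ x, n + c x))
    {s : Set (X × G)} (hs : MeasurableSet s) (hinv : T ⁻¹' s = s) (y : G) :
    (∀ n : ℤ, μ ((·, y + n • a) ⁻¹' s) = 0) ∨ ∀ n : ℤ, μ ((·, y + n • a) ⁻¹' sᶜ) = 0 := by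
  set φ : X × ℤ → X × G := Prod.map id fun n => y + n • a
  have hφ : Measurable φ := Measurable.prodMap measurable_id (measurable_of_countable _)
  have hBinv : T' ⁻¹' (φ ⁻¹' s) = φ ⁻¹' s := by
    rw [← preimage_comp, (semiconj_prodMap_add_zsmul hT hT' y).comp_eq, preimage_comp, hinv]
  refine (herg.ae_empty_or_univ (hs.preimage hφ) hBinv).imp (fun h => ?_) (fun h => ?_)
  · exact (Measure.prod_count_eq_zero_iff (hs.preimage hφ)).1 (ae_eq_empty.1 h)
  · exact (Measure.prod_count_eq_zero_iff (hs.compl.preimage hφ)).1 (ae_eq_univ.1 h)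

theorem preErgodic_skewProduct_of_preErgodic_intExtension [NeZero μ] {ν : Measure G} [SFinite ν]
    (herg : PreErgodic T' (μ.prod Measure.count)) (hrot : PreErgodic (· + a) ν)
    (hT : ∀ x y, T (x, y) = (σ x, y + c x • a)) (hT' : ∀ x n, T' (x, n) = (σ x, n + c x)) :
    PreErgodic T (μ.prod ν) := by
  refine ⟨fun s hs hinv => ?_⟩
  have hdich := fiber_null_or_conull_along_orbit herg hT hT' hs hinv
  have null_or_conull : ∀ y, μ ((·, y) ⁻¹' s) = 0 ∨ μ ((·, y) ⁻¹' sᶜ) = 0 := fun y => by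
    simpa using (hdich y).imp (· 0) (· 0)
  set E := {y | μ ((·, y) ⁻¹' s) = 0}
  have hE : MeasurableSet E := measurable_measure_prodMk_right hs (measurableSet_singleton 0)
  rw [eventuallyConst_set']
  refine (hrot.ae_empty_or_univ hE (preimage_add_setOf_fiber_null hdich)).symm.imp
    (fun h => ae_eq_empty.2 ?_) (fun h => ae_eq_univ.2 ?_)
  · exact Measure.prod_null_of_ae_fiber_null hs <| h.mem_iff.mono fun y hy => hy.2 trivial
  · refine Measure.prod_null_of_ae_fiber_null hs.compl <| h.mem_iff.mono fun y hy => ?_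
    exact (null_or_conull y).resolve_left hy.1

theorem measurePreserving_skewProduct_add_zsmul [MeasurableAdd₂ G] {ν : Measure G} [SFinite ν]
    [ν.IsAddRightInvariant] (hσ : MeasurePreserving σ μ μ) (hc : Measurable c)
    (hT : ∀ x y, T (x, y) = (σ x, y + c x • a)) : MeasurePreserving T (μ.prod ν) (μ.prod ν) := by
  obtain rfl : T = fun p => (σ p.1, p.2 + c p.1 • a) := funext fun p => hT p.1 p.2
  exact hσ.skew_product (g := fun x y => y + c x • a)
    (measurable_snd.add ((measurable_of_countable (· • a)).comp (hc.comp measurable_fst)))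
    (ae_of_all _ fun _ => (measurePreserving_add_right ν _).map_eq)

theorem ergodic_skewProduct_of_ergodic_intExtension [MeasurableAdd₂ G] [NeZero μ] {ν : Measure G}
    [SFinite ν] [ν.IsAddRightInvariant] (hσ : MeasurePreserving σ μ μ) (hc : Measurable c)
    (herg : PreErgodic T' (μ.prod Measure.count)) (hrot : PreErgodic (· + a) ν)
    (hT : ∀ x y, T (x, y) = (σ x, y + c x • a)) (hT' : ∀ x n, T' (x, n) = (σ x, n + c x)) :
    Ergodic T (μ.prod ν) :=
  ⟨measurePreserving_skewProduct_add_zsmul hσ hc hT,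
    preErgodic_skewProduct_of_preErgodic_intExtension herg hrot hT hT'⟩

end SkewProduct

/-- If `σ : 𝕋 → 𝕋` is measure-preserving and ergodic, `f : 𝕋 → ℤ` is measurable, `α` is
irrational, and the skew product `T̃_f(x,n) = (σ(x), n + f(x))` on `𝕋 × ℤ` is ergodic with
respect to the σ-finite measure `λ × c`, then the skew product
`T_f(x,y) = (σ(x), y + α·f(x))` on `𝕋²` is ergodic with respect to `λ × λ`. -/
theorem stmt8 (α : ℝ) (hα : Irrational α)
    (σ : UnitAddCircle → UnitAddCircle)
    (hσ : Ergodic σ (volume : Measure UnitAddCircle))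
    (f : UnitAddCircle → ℤ) (hf : Measurable f)
    (Tf : UnitAddCircle × UnitAddCircle → UnitAddCircle × UnitAddCircle)
    (hTf : ∀ x y, Tf (x, y) = (σ x, y + ↑(α * (f x : ℝ))))
    (Tf' : UnitAddCircle × ℤ → UnitAddCircle × ℤ)
    (hTf' : ∀ x n, Tf' (x, n) = (σ x, n + f x))
    (herg : Ergodic Tf'
      ((volume : Measure UnitAddCircle).prod (Measure.count : Measure ℤ))) :
    Ergodic Tf ((volume : Measure UnitAddCircle).prod (volume : Measure UnitAddCircle)) := by
  have hTf_zsmul : ∀ x y, Tf (x, y) = (σ x, y + f x • (α : UnitAddCircle)) := fun x y => by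
    rw [hTf, mul_comm, ← zsmul_eq_mul, AddCircle.coe_zsmul]
  have hrot : Ergodic (· + (α : UnitAddCircle)) volume :=
    AddCircle.ergodic_add_right.2 <| AddCircle.denseRange_zsmul_iff.1 <|
      AddCircle.denseRange_zsmul_coe_iff.2 (by simpa using hα)
  exact ergodic_skewProduct_of_ergodic_intExtension hσ.toMeasurePreserving hf herg.toPreErgodic
    hrot.toPreErgodic hTf_zsmul hTf'
end

section
/- Let η ∈ (0,1) be irrational. The map R : 𝕋×ℤ₂ → 𝕋×ℤ₂ defined by R(x, a) = (x + η, a) if the canonical representative of x lies in [0, 1−η), and R(x, a) = (x + η, a + 1) if it lies in [1−η, 1), preserves the product measure λ×c and is ergodic. -/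
/-!
Unfold `𝕋 × ℤ₂` into the circle `ℝ/2ℤ` of length two: `t ↦ (t mod 1, ⌊t⌋ mod 2)` descends to a
map `ℝ/2ℤ → 𝕋 × ℤ₂` sending Lebesgue measure to `λ × count`, and the rotation by `η` of `ℝ/2ℤ` to
`R`, because adding `η < 1` to `t` raises `⌊t⌋` by one exactly when `fract t ≥ 1 - η`. Since
`η / 2` is irrational this rotation is ergodic, hence so is its factor `R`, for `λ × count` and
for its multiple `λ × c`.
-/

open MeasureTheory

open Set

section FloorAdd

variable {α : Type*} [Field α] [LinearOrder α] [IsStrictOrderedRing α] [FloorRing α] {t η : α}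

lemma Int.floor_add_of_fract_lt (hη0 : 0 ≤ η) (h : Int.fract t < 1 - η) : ⌊t + η⌋ = ⌊t⌋ := by
  rw [Int.floor_eq_iff]
  constructor <;> linarith [Int.floor_le t, Int.self_sub_floor t]

lemma Int.floor_add_of_le_fract (hη1 : η < 1) (h : 1 - η ≤ Int.fract t) :
    ⌊t + η⌋ = ⌊t⌋ + 1 := by
  rw [Int.floor_eq_iff]
  push_cast
  constructor <;> linarith [Int.lt_floor_add_one t, Int.self_sub_floor t]

end FloorAdd

lemma AddCircle.measurePreserving_mk_Ico (T : ℝ) [Fact (0 < T)] (t : ℝ) :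
    MeasurePreserving ((↑) : ℝ → AddCircle T) (volume.restrict (Ico t (t + T))) volume := by
  rw [Measure.restrict_congr_set Ico_ae_eq_Ioc]
  exact AddCircle.measurePreserving_mk T t

lemma MeasureTheory.Measure.prod_count_eq_sum_map {α β : Type*} [MeasurableSpace α]
    [MeasurableSpace β] [Countable β] (μ : Measure α) [SFinite μ] :
    μ.prod count = sum fun b : β => μ.map (·, b) := by
  simp_rw [Measure.count, Measure.prod_sum_right, Measure.prod_dirac]

lemma rep_coe (t : ℝ) : rep (t : UnitAddCircle) = Int.fract t := by
  simp [rep, AddCircle.coe_equivIco_mk_apply]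

lemma measurable_rep : Measurable rep :=
  measurable_subtype_coe.comp (AddCircle.measurableEquivIco 1 0).measurable

noncomputable def skewRotation (η : ℝ) (p : UnitAddCircle × ZMod 2) : UnitAddCircle × ZMod 2 :=
  (p.1 + η, if rep p.1 < 1 - η then p.2 else p.2 + 1)

lemma measurable_skewRotation (η : ℝ) : Measurable (skewRotation η) := by
  refine (measurable_fst.add_const _).prodMk (Measurable.ite ?_ measurable_snd ?_)
  · exact measurableSet_lt (measurable_rep.comp measurable_fst) measurable_const
  · exact (measurable_of_countable fun a : ZMod 2 => a + 1).comp measurable_snd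

noncomputable def sheet (t : ℝ) : UnitAddCircle × ZMod 2 := (t, (⌊t⌋ : ZMod 2))

lemma measurable_sheet : Measurable sheet :=
  (AddCircle.continuous_mk' 1).measurable.prodMk
    ((measurable_of_countable fun n : ℤ => (n : ZMod 2)).comp Int.measurable_floor)

lemma sheet_periodic : Function.Periodic sheet 2 := by
  intro t
  simp only [sheet, Prod.mk.injEq]
  constructor
  · rw [← one_add_one_eq_two, ← add_assoc, AddCircle.coe_add_period, AddCircle.coe_add_period]
  · rw [Int.floor_add_ofNat]
    push_cast
    rw [show (2 : ZMod 2) = 0 from rfl, add_zero]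

lemma sheet_add {η : ℝ} (hη0 : 0 ≤ η) (hη1 : η < 1) (t : ℝ) :
    sheet (t + η) = skewRotation η (sheet t) := by
  simp only [sheet, skewRotation, rep_coe, AddCircle.coe_add, Prod.mk.injEq, true_and]
  split_ifs with h
  · rw [Int.floor_add_of_fract_lt hη0 h]
  · rw [Int.floor_add_of_le_fract hη1 (not_lt.1 h)]
    push_cast
    rfl

instance : Fact ((0 : ℝ) < 2) := ⟨two_pos⟩

noncomputable def sheetAddCircle (x : AddCircle (2 : ℝ)) : UnitAddCircle × ZMod 2 :=
  sheet (AddCircle.equivIco 2 0 x)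

lemma sheetAddCircle_coe (t : ℝ) : sheetAddCircle t = sheet t := by
  rw [sheetAddCircle, AddCircle.coe_equivIco_mk_apply, Int.fract, sub_mul,
    div_mul_cancel₀ _ two_ne_zero, ← zsmul_eq_mul, sheet_periodic.sub_zsmul_eq]

lemma measurable_sheetAddCircle : Measurable sheetAddCircle :=
  measurable_sheet.comp (measurable_subtype_coe.comp (AddCircle.measurableEquivIco 2 0).measurable)

lemma semiconj_sheetAddCircle {η : ℝ} (hη0 : 0 ≤ η) (hη1 : η < 1) :
    Function.Semiconj sheetAddCircle ((η : AddCircle (2 : ℝ)) + ·) (skewRotation η) := by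
  intro x
  induction x using QuotientAddGroup.induction_on with | H t => ?_
  show sheetAddCircle (η + t : AddCircle (2 : ℝ)) = _
  rw [← AddCircle.coe_add, sheetAddCircle_coe, sheetAddCircle_coe, add_comm, sheet_add hη0 hη1]

lemma map_sheet_restrict_Ico (n : ℤ) :
    (volume.restrict (Ico (n : ℝ) (n + 1))).map sheet =
      volume.map fun x : UnitAddCircle => (x, (n : ZMod 2)) := by
  have h : sheet =ᵐ[volume.restrict (Ico (n : ℝ) (n + 1))]
      (fun x : UnitAddCircle => (x, (n : ZMod 2))) ∘ (↑) := by
    filter_upwards [ae_restrict_mem measurableSet_Ico] with t ht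
    simp [sheet, Int.floor_eq_iff.2 ht]
  have hmk := AddCircle.measurePreserving_mk_Ico 1 n
  rw [Measure.map_congr h, ← Measure.map_map measurable_prodMk_right hmk.measurable, hmk.map_eq]

lemma measurePreserving_sheetAddCircle :
    MeasurePreserving sheetAddCircle volume (volume.prod Measure.count) := by
  refine ⟨measurable_sheetAddCircle, ?_⟩
  have hcoe : sheetAddCircle ∘ ((↑) : ℝ → AddCircle (2 : ℝ)) = sheet := funext sheetAddCircle_coe
  have hmk := AddCircle.measurePreserving_mk_Ico 2 0
  calc volume.map sheetAddCircle
      = (volume.restrict (Ico (0 : ℝ) 2)).map sheet := by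
        rw [← hmk.map_eq, Measure.map_map measurable_sheetAddCircle hmk.measurable, hcoe,
          zero_add]
    _ = (volume.restrict (Ico (0 : ℝ) 1)).map sheet +
          (volume.restrict (Ico (1 : ℝ) 2)).map sheet := by
        rw [← Ico_union_Ico_eq_Ico zero_le_one one_le_two,
          Measure.restrict_union Ico_disjoint_Ico_same measurableSet_Ico,
          Measure.map_add _ _ measurable_sheet]
    _ = volume.map (fun x : UnitAddCircle => (x, (0 : ZMod 2))) +
          volume.map (fun x : UnitAddCircle => (x, (1 : ZMod 2))) := by
        have h0 := map_sheet_restrict_Ico 0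
        have h1 := map_sheet_restrict_Ico 1
        norm_num at h0 h1
        rw [h0, h1]
    _ = volume.prod Measure.count := by
        rw [Measure.prod_count_eq_sum_map, Measure.sum_fintype]
        exact (Fin.sum_univ_two fun i : ZMod 2 => volume.map fun x : UnitAddCircle => (x, i)).symm

lemma ergodic_skewRotation {η : ℝ} (hη0 : 0 ≤ η) (hη1 : η < 1) (hη : Irrational η) :
    Ergodic (skewRotation η) (volume.prod Measure.count) := by
  have hrot : Ergodic ((η : AddCircle (2 : ℝ)) + ·) volume :=
    (ergodic_add_left_iff_denseRange_zsmul volume).2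
      (AddCircle.denseRange_zsmul_coe_iff.2 (by simpa using hη.div_natCast two_ne_zero))
  exact measurePreserving_sheetAddCircle.ergodic_of_ergodic_semiconj hrot
    (measurable_skewRotation η) (semiconj_sheetAddCircle hη0 hη1)

open Classical in
/-- The skew product `R(x,a) = (x + η, a)` for `x` with representative in `[0, 1-η)` and
`R(x,a) = (x + η, a + 1)` for `x` with representative in `[1-η, 1)` preserves the product
measure `λ × c` on `𝕋 × ℤ₂` and is ergodic. -/
theorem stmt10 (η : ℝ) (hη0 : 0 < η) (hη1 : η < 1) (hη : Irrational η)
    (R : UnitAddCircle × ZMod 2 → UnitAddCircle × ZMod 2)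
    (hR : ∀ x a, R (x, a) = (x + ↑η, if rep x < 1 - η then a else a + 1)) :
    Ergodic R ((volume : Measure UnitAddCircle).prod
      ((2 : ENNReal)⁻¹ • (Measure.count : Measure (ZMod 2)))) := by
  obtain rfl : R = skewRotation η := funext fun p => hR p.1 p.2
  rw [Measure.prod_smul_right]
  exact (ergodic_skewRotation hη0.le hη1 hη).smul_measure _
end

section
/- The map R : X×ℤ₂ → X×ℤ₂ defined by R(ω, a) = (T ω, a + ω₀), where ω₀ ∈ {0,1} is viewed as an element of ℤ₂, preserves the product measure μ×c and is ergodic. -/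
/-!
Read the coordinates `ω i`, `|i| ≤ N`, in `ℤ₂` and append `a`: this "window" of `(ω, a)` lies in
a finite abelian group, and the window map pushes `μ × c` forward to the uniform measure. On
windows `R` acts through a surjective homomorphism, and surjective homomorphisms of finite groups
preserve uniform measure; this gives invariance of `μ × c` on the generating algebra of cylinders.
For `M = 2N + 2`, the pair (window of `x`, window of `R^M x`) is a homomorphic image of the window
over `[-N, 3N + 2]`, and this homomorphism is injective, hence bijective by counting. So every
cylinder `A` is independent of `R^{-M} A`, and approximating an invariant set `s` by cylinders
forces `μ(s) = μ(s)²`.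
-/

open MeasureTheory Set Function ProbabilityTheory
open scoped ENNReal symmDiff

section Mixing

variable {α : Type*} [MeasurableSpace α] {μ : Measure α} [IsProbabilityMeasure μ]
  {f : α → α}

lemma abs_measureReal_sub_sq_le_of_indep (hf : MeasurePreserving f μ μ) {s A : Set α} {n : ℕ}
    (hs : MeasurableSet s) (hfs : f^[n] ⁻¹' s = s) (hA : MeasurableSet A)
    (hindep : μ (A ∩ f^[n] ⁻¹' A) = μ A * μ A) :
    |μ.real s - μ.real s ^ 2| ≤ 4 * μ.real (s ∆ A) := by
  have hfA : MeasurableSet (f^[n] ⁻¹' A) := (hf.iterate n).measurable hA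
  have hsfA : μ.real (s ∆ (f^[n] ⁻¹' A)) = μ.real (s ∆ A) := by
    rw [← hfs, ← preimage_symmDiff,
      (hf.iterate n).measureReal_preimage (hs.symmDiff hA).nullMeasurableSet, hfs]
  have hsub : s ∆ (A ∩ f^[n] ⁻¹' A) ⊆ s ∆ A ∪ s ∆ (f^[n] ⁻¹' A) := fun x => by
    simp only [mem_symmDiff, mem_inter_iff, mem_union]
    tauto
  have h₁ := abs_measureReal_sub_le_measureReal_symmDiff hs.nullMeasurableSet
    hA.nullMeasurableSet (μ := μ)
  have h₂ : |μ.real s - μ.real A ^ 2| ≤ 2 * μ.real (s ∆ A) := by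
    have := abs_measureReal_sub_le_measureReal_symmDiff hs.nullMeasurableSet
      (hA.inter hfA).nullMeasurableSet (μ := μ)
    rw [measureReal_def (s := A ∩ _), hindep, ENNReal.toReal_mul, ← measureReal_def] at this
    rw [sq]
    linarith [(measureReal_mono hsub (μ := μ)).trans (measureReal_union_le _ _)]
  rw [abs_le] at h₁ h₂ ⊢
  constructor <;> nlinarith [measureReal_nonneg (μ := μ) (s := s),
    measureReal_nonneg (μ := μ) (s := A), measureReal_le_one (μ := μ) (s := s),
    measureReal_le_one (μ := μ) (s := A)]

theorem Ergodic.of_measureDense_of_exists_iterate_indep (hf : MeasurePreserving f μ μ)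
    {𝒜 : Set (Set α)} (h𝒜 : μ.MeasureDense 𝒜)
    (hindep : ∀ A ∈ 𝒜, ∃ n, μ (A ∩ f^[n] ⁻¹' A) = μ A * μ A) : Ergodic f μ := by
  refine ⟨hf, ⟨fun s hs hfs => ?_⟩⟩
  have hsq : μ.real s = μ.real s ^ 2 := by
    refine eq_of_abs_sub_nonpos (le_of_forall_pos_le_add fun ε hε => ?_)
    obtain ⟨A, hA, hsA⟩ := h𝒜.approx s hs (measure_ne_top μ s) (ε / 4) (by positivity)
    obtain ⟨n, hn⟩ := hindep A hA
    have := abs_measureReal_sub_sq_le_of_indep hf hs (IsFixedPt.preimage_iterate hfs n)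
      (h𝒜.measurable A hA) hn
    have : μ.real (s ∆ A) < ε / 4 := ENNReal.toReal_lt_of_lt_ofReal hsA
    linarith
  rw [Filter.eventuallyConst_set', ae_eq_empty, ae_eq_univ, prob_compl_eq_zero_iff hs,
    ← measureReal_eq_zero_iff, ← ENNReal.toReal_eq_one_iff, ← measureReal_def]
  have : μ.real s * (1 - μ.real s) = 0 := by linear_combination hsq
  rcases mul_eq_zero.1 this with h | h
  · exact .inl h
  · exact .inr (by linarith)

end Mixing

section UniformOn

variable {α β : Type*} [MeasurableSpace α] [MeasurableSingletonClass α] [Fintype α]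
  [MeasurableSpace β] [MeasurableSingletonClass β] [Fintype β]

lemma uniformOn_univ_singleton (a : α) :
    uniformOn (univ : Set α) {a} = (Fintype.card α : ℝ≥0∞)⁻¹ := by
  rw [uniformOn_univ, Measure.count_singleton, ENNReal.div_eq_inv_mul, mul_one]

lemma eq_uniformOn_univ_of_measure_singleton {ρ : Measure α}
    (h : ∀ a, ρ {a} = (Fintype.card α : ℝ≥0∞)⁻¹) : ρ = uniformOn univ :=
  Measure.ext_iff_singleton.2 fun a => by rw [h, uniformOn_univ_singleton]

lemma uniformOn_univ_prod_uniformOn_univ :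
    (uniformOn univ : Measure α).prod (uniformOn univ : Measure β) = uniformOn univ := by
  refine eq_uniformOn_univ_of_measure_singleton fun ⟨a, b⟩ => ?_
  rw [← singleton_prod_singleton, Measure.prod_prod, uniformOn_univ_singleton,
    uniformOn_univ_singleton, Fintype.card_prod, Nat.cast_mul, ENNReal.mul_inv (by simp) (by simp)]

lemma AddMonoidHom.measurePreserving_uniformOn_univ {A B : Type*} [AddGroup A] [AddGroup B]
    [Fintype A] [Fintype B] [DecidableEq B] [MeasurableSpace A] [MeasurableSingletonClass A]
    [MeasurableSpace B] [MeasurableSingletonClass B] (φ : A →+ B) (hφ : Surjective φ) :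
    MeasurePreserving φ (uniformOn univ) (uniformOn univ) := by
  refine ⟨.of_discrete, eq_uniformOn_univ_of_measure_singleton fun b => ?_⟩
  set ρ := Measure.map φ (uniformOn (univ : Set A))
  have hρ (b : B) : ρ {b} = (Finset.univ.filter (φ · = b)).card / Fintype.card A := by
    rw [Measure.map_apply .of_discrete (measurableSet_singleton b), uniformOn_univ,
      ← Measure.count_apply_finset]
    congr
    ext
    simp
  have hfiber (b : B) : ρ {b} = ρ {0} := by
    rw [hρ, hρ, AddMonoidHom.card_fiber_eq_of_mem_range φ (hφ b) (hφ 0)]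
  have : IsProbabilityMeasure ρ := Measure.isProbabilityMeasure_map AEMeasurable.of_discrete
  have hmass : ρ {0} * Fintype.card B = 1 := by
    calc ρ {0} * Fintype.card B = ∑ b, ρ {b} := by simp [hfiber, mul_comm]
      _ = 1 := by rw [sum_measure_singleton, Finset.coe_univ, measure_univ]
  rw [hfiber, ENNReal.eq_inv_of_mul_eq_one_left hmass]

end UniformOn

namespace BernoulliSkew

local notation "Ω" => (ℤ → Bool) × ZMod 2

def bit (b : Bool) : ZMod 2 := if b = true then 1 else 0

lemma bit_injective : Injective bit := by decide

lemma bit_surjective : Surjective bit := by decide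

def skewShift (p : Ω) : Ω := (fun n => p.1 (n + 1), p.2 + bit (p.1 0))

lemma measurable_skewShift : Measurable skewShift := by
  unfold skewShift; fun_prop

def window (s : Finset ℤ) (p : Ω) : (s → ZMod 2) × ZMod 2 := (fun i => bit (p.1 i), p.2)

lemma measurable_window (s : Finset ℤ) : Measurable (window s) := by
  unfold window; fun_prop

noncomputable def centeredIcc (N : ℕ) : Finset ℤ := Finset.Icc (-N : ℤ) N

lemma mem_centeredIcc {N : ℕ} {i : ℤ} : i ∈ centeredIcc N ↔ -N ≤ i ∧ i ≤ N :=
  Finset.mem_Icc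

lemma card_centeredIcc (N : ℕ) : (centeredIcc N).card = 2 * N + 1 := by
  rw [centeredIcc, Int.card_Icc]; omega

lemma zero_mem_centeredIcc (N : ℕ) : 0 ∈ centeredIcc N := by
  rw [mem_centeredIcc]; omega

lemma centeredIcc_mono {M N : ℕ} (h : M ≤ N) : centeredIcc M ⊆ centeredIcc N :=
  Finset.Icc_subset_Icc (by omega) (by omega)

lemma window_eq_restrict_window {s t : Finset ℤ} (h : s ⊆ t) :
    window s = Prod.map (Finset.restrict₂ (π := fun _ => ZMod 2) h) id ∘ window t := rfl

def cylinders : Set (Set Ω) := {A | ∃ N U, A = window (centeredIcc N) ⁻¹' U}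

lemma isSetAlgebra_cylinders : IsSetAlgebra cylinders where
  empty_mem := ⟨0, ∅, rfl⟩
  compl_mem := by
    rintro _ ⟨N, U, rfl⟩
    exact ⟨N, Uᶜ, rfl⟩
  union_mem := by
    rintro _ _ ⟨M, U, rfl⟩ ⟨N, V, rfl⟩
    rw [window_eq_restrict_window (centeredIcc_mono (le_max_left M N)),
      window_eq_restrict_window (centeredIcc_mono (le_max_right M N)), preimage_comp,
      preimage_comp, ← preimage_union]
    exact ⟨_, _, rfl⟩

lemma measurableSpace_eq_generateFrom_cylinders :
    (inferInstance : MeasurableSpace Ω) = MeasurableSpace.generateFrom cylinders := by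
  refine le_antisymm ?_ (MeasurableSpace.generateFrom_le ?_)
  · have hwindow (N : ℕ) : Measurable[.generateFrom cylinders] (window (centeredIcc N)) :=
      fun U _ => MeasurableSpace.measurableSet_generateFrom ⟨N, U, rfl⟩
    have hcoord (i : ℤ) : Measurable[.generateFrom cylinders] fun p : Ω => p.1 i := by
      have hi : i ∈ centeredIcc i.natAbs := by rw [mem_centeredIcc]; omega
      have : (fun p : Ω => p.1 i) =
          (fun q => decide (q.1 ⟨i, hi⟩ = 1)) ∘ window (centeredIcc i.natAbs) := by
        funext p
        cases h : p.1 i <;> simp [window, bit, h]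
      exact this ▸ Measurable.of_discrete.comp (hwindow _)
    exact sup_le (@measurable_pi_lambda Ω _ _ (.generateFrom cylinders) _ _ hcoord).comap_le
      (hwindow 0).snd.comap_le
  · rintro _ ⟨N, U, rfl⟩
    exact measurable_window _ (to_countable U).measurableSet

lemma exists_bit_eq (s : Finset ℤ) (g : s → ZMod 2) :
    ∃ f : ℤ → Bool, ∀ i : s, bit (f i) = g i := by
  classical
  refine ⟨fun i => if h : i ∈ s then surjInv bit_surjective (g ⟨i, h⟩) else false, fun i => ?_⟩
  simp [i.2, surjInv_eq]

def windowShift (N : ℕ) :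
    ((centeredIcc (N + 1) → ZMod 2) × ZMod 2) →+ ((centeredIcc N → ZMod 2) × ZMod 2) where
  toFun q := (fun i => q.1 ⟨i + 1, by grind [mem_centeredIcc]⟩,
    q.2 + q.1 ⟨0, zero_mem_centeredIcc _⟩)
  map_zero' := rfl
  map_add' x y := by
    ext <;> simp only [Prod.fst_add, Prod.snd_add, Pi.add_apply]
    abel

lemma window_skewShift (N : ℕ) (p : Ω) :
    window (centeredIcc N) (skewShift p) = windowShift N (window (centeredIcc (N + 1)) p) := rfl

lemma windowShift_surjective (N : ℕ) : Surjective (windowShift N) := by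
  classical
  rintro ⟨g, a⟩
  let q : centeredIcc (N + 1) → ZMod 2 := fun j =>
    if h : (j : ℤ) - 1 ∈ centeredIcc N then g ⟨j - 1, h⟩ else 0
  refine ⟨(q, a - q ⟨0, zero_mem_centeredIcc _⟩), ?_⟩
  ext i
  · simp [windowShift, q]
  · simp [windowShift]

lemma skewShift_iterate (n : ℕ) (p : Ω) :
    skewShift^[n] p = (fun k => p.1 (k + n), p.2 + ∑ k ∈ Finset.range n, bit (p.1 k)) := by
  induction n with
  | zero => simp
  | succ n ih =>
    rw [iterate_succ_apply', ih, skewShift, Finset.sum_range_succ]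
    ext
    · simp [add_assoc, add_comm (1 : ℤ)]
    · simp [add_assoc]

noncomputable def pairIcc (N : ℕ) : Finset ℤ := Finset.Icc (-N : ℤ) (3 * N + 2)

lemma mem_pairIcc {N : ℕ} {i : ℤ} : i ∈ pairIcc N ↔ -N ≤ i ∧ i ≤ 3 * N + 2 :=
  Finset.mem_Icc

lemma card_pairIcc (N : ℕ) : (pairIcc N).card = 4 * N + 3 := by
  rw [pairIcc, Int.card_Icc]; omega

def windowPair (N : ℕ) : ((pairIcc N → ZMod 2) × ZMod 2) →+
    ((centeredIcc N → ZMod 2) × ZMod 2) × ((centeredIcc N → ZMod 2) × ZMod 2) where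
  toFun q :=
    ((fun i => q.1 ⟨i, by grind [mem_centeredIcc, mem_pairIcc]⟩, q.2),
     (fun i => q.1 ⟨i + (2 * N + 2 : ℕ), by grind [mem_centeredIcc, mem_pairIcc]⟩,
      q.2 + ∑ k ∈ (Finset.range (2 * N + 2)).attach,
        q.1 ⟨k, by grind [mem_pairIcc]⟩))
  map_zero' := by ext <;> simp
  map_add' x y := by
    ext <;> simp only [Prod.fst_add, Prod.snd_add, Pi.add_apply, Finset.sum_add_distrib]
    abel

lemma window_skewShift_iterate (N : ℕ) (p : Ω) :
    (window (centeredIcc N) p, window (centeredIcc N) (skewShift^[2 * N + 2] p)) =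
      windowPair N (window (pairIcc N) p) := by
  rw [skewShift_iterate]
  ext <;> simp [window, windowPair,
    Finset.sum_attach (Finset.range (2 * N + 2)) fun k : ℕ => bit (p.1 k)]

lemma windowPair_injective (N : ℕ) : Injective (windowPair N) := by
  refine (injective_iff_map_eq_zero _).2 fun ⟨q, a⟩ h => ?_
  simp only [windowPair, AddMonoidHom.coe_mk, ZeroHom.coe_mk, Prod.mk_eq_zero, funext_iff,
    Pi.zero_apply] at h
  obtain ⟨⟨h₁, rfl⟩, h₂, hsum⟩ := h
  have hgap : ∀ j : pairIcc N, (j : ℤ) ≠ N + 1 → q j = 0 := by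
    intro j hne
    have := mem_pairIcc.1 j.2
    by_cases hjN : (j : ℤ) ≤ N
    · exact h₁ ⟨j, mem_centeredIcc.2 (by omega)⟩
    · simpa using h₂ ⟨j - (2 * N + 2 : ℕ), mem_centeredIcc.2 (by omega)⟩
  -- `N + 1` is the only coordinate outside both windows, and the sum sees it
  have hN : q ⟨N + 1, mem_pairIcc.2 (by omega)⟩ = 0 := by
    rw [Finset.sum_eq_single ⟨N + 1, Finset.mem_range.2 (by omega)⟩, zero_add] at hsum
    · exact hsum
    · intro k _ hk
      exact hgap _ fun h => hk (Subtype.ext (by simp at h ⊢; omega))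
    · simp
  ext j
  · by_cases hj : (j : ℤ) = N + 1
    · simpa [← hj] using hN
    · exact hgap j hj
  · rfl

lemma windowPair_surjective (N : ℕ) : Surjective (windowPair N) := by
  refine ((Fintype.bijective_iff_injective_and_card _).2 ⟨windowPair_injective N, ?_⟩).2
  rw [Fintype.card_prod, Fintype.card_prod, Fintype.card_prod, Fintype.card_fun, Fintype.card_fun,
    Fintype.card_coe, Fintype.card_coe, card_centeredIcc, card_pairIcc, ZMod.card]
  ring

section Measure

variable {μ : Measure (ℤ → Bool)}
  (hμ : ∀ (s : Finset ℤ) (f : ℤ → Bool), μ {ω | ∀ i ∈ s, ω i = f i} = (1 / 2 : ℝ≥0∞) ^ s.card)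
include hμ

lemma measurePreserving_window (s : Finset ℤ) :
    MeasurePreserving (window s) (μ.prod (uniformOn univ)) (uniformOn univ) := by
  refine ⟨measurable_window s, eq_uniformOn_univ_of_measure_singleton fun ⟨g, a⟩ => ?_⟩
  obtain ⟨f, hf⟩ := exists_bit_eq s g
  have : window s ⁻¹' {(g, a)} = {ω | ∀ i ∈ s, ω i = f i} ×ˢ {a} := by
    ext ⟨ω, b⟩
    simp [window, funext_iff, ← hf, bit_injective.eq_iff]
  rw [Measure.map_apply (measurable_window s) (measurableSet_singleton _), this,
    Measure.prod_prod, hμ, uniformOn_univ_singleton]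
  simp [ZMod.card, ENNReal.mul_inv, ENNReal.inv_pow]

lemma measurePreserving_skewShift [IsFiniteMeasure μ] :
    MeasurePreserving skewShift (μ.prod (uniformOn univ)) (μ.prod (uniformOn univ)) := by
  refine ⟨measurable_skewShift, ext_of_generate_finite cylinders
    measurableSpace_eq_generateFrom_cylinders
    isSetAlgebra_cylinders.isSetRing.isSetSemiring.isPiSystem ?_
    (by simp [Measure.map_apply measurable_skewShift])⟩
  rintro _ ⟨N, U, rfl⟩
  have hU := (to_countable U).measurableSet
  have h := ((windowShift N).measurePreserving_uniformOn_univ (windowShift_surjective N)).comp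
    (measurePreserving_window hμ (centeredIcc (N + 1)))
  rw [Measure.map_apply measurable_skewShift (measurable_window _ hU), ← preimage_comp,
    (measurePreserving_window hμ _).measure_preimage hU.nullMeasurableSet]
  exact h.measure_preimage hU.nullMeasurableSet

lemma measure_inter_preimage_skewShift_iterate (N : ℕ)
    (U V : Set ((centeredIcc N → ZMod 2) × ZMod 2)) :
    μ.prod (uniformOn univ) (window (centeredIcc N) ⁻¹' U ∩
        skewShift^[2 * N + 2] ⁻¹' (window (centeredIcc N) ⁻¹' V)) =
      μ.prod (uniformOn univ) (window (centeredIcc N) ⁻¹' U) *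
        μ.prod (uniformOn univ) (window (centeredIcc N) ⁻¹' V) := by
  have h : MeasurePreserving
      (fun p => (window (centeredIcc N) p, window (centeredIcc N) (skewShift^[2 * N + 2] p)))
      (μ.prod (uniformOn univ)) ((uniformOn univ).prod (uniformOn univ)) := by
    rw [uniformOn_univ_prod_uniformOn_univ, funext (window_skewShift_iterate N)]
    exact ((windowPair N).measurePreserving_uniformOn_univ (windowPair_surjective N)).comp
      (measurePreserving_window hμ _)
  have hU := (to_countable U).measurableSet
  have hV := (to_countable V).measurableSet
  rw [(measurePreserving_window hμ _).measure_preimage hU.nullMeasurableSet,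
    (measurePreserving_window hμ _).measure_preimage hV.nullMeasurableSet, ← Measure.prod_prod,
    ← h.measure_preimage (hU.prod hV).nullMeasurableSet]
  rfl

theorem ergodic_skewShift [IsProbabilityMeasure μ] :
    Ergodic skewShift (μ.prod (uniformOn univ)) := by
  refine Ergodic.of_measureDense_of_exists_iterate_indep (measurePreserving_skewShift hμ)
    (.of_generateFrom_isSetAlgebra_finite _ isSetAlgebra_cylinders
      measurableSpace_eq_generateFrom_cylinders) ?_
  rintro _ ⟨N, U, rfl⟩
  exact ⟨2 * N + 2, measure_inter_preimage_skewShift_iterate hμ N U U⟩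

end Measure

end BernoulliSkew

/-- The skew product `R(ω,a) = (T ω, a + ω₀)` over the Bernoulli shift on `{0,1}^ℤ` with
weights `(1/2, 1/2)`, where `ω₀` is viewed as an element of `ℤ₂`, preserves the product
measure `μ × c` and is ergodic. -/
theorem stmt12
    (μ : Measure (ℤ → Bool)) [IsProbabilityMeasure μ]
    (hμ : ∀ (s : Finset ℤ) (f : ℤ → Bool),
      μ {ω | ∀ i ∈ s, ω i = f i} = (1 / 2 : ENNReal) ^ s.card)
    (T : (ℤ → Bool) → (ℤ → Bool)) (hT : ∀ ω n, T ω n = ω (n + 1))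
    (R : (ℤ → Bool) × ZMod 2 → (ℤ → Bool) × ZMod 2)
    (hR : ∀ ω a, R (ω, a) = (T ω, a + if ω 0 = true then (1 : ZMod 2) else 0)) :
    Ergodic R (μ.prod ((2 : ENNReal)⁻¹ • (Measure.count : Measure (ZMod 2)))) := by
  have hskew : R = BernoulliSkew.skewShift := by
    funext ⟨ω, a⟩
    rw [hR, BernoulliSkew.skewShift, BernoulliSkew.bit, funext (hT ω)]
  have hcount : (2 : ℝ≥0∞)⁻¹ • (Measure.count : Measure (ZMod 2)) = uniformOn univ :=
    eq_uniformOn_univ_of_measure_singleton fun a => by simp [ZMod.card]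
  rw [hskew, hcount]
  exact BernoulliSkew.ergodic_skewShift hμ
end

section
/- For the constant cocycle A(x) = rot_{π/3} over the irrational rotation T(x) = x + η on 𝕋, the cocycle is not cohomologous to a scalar multiple of the identity: there exist no measurable maps C : 𝕋 → GL₂(ℂ) and λ : 𝕋 → ℂ such that C(x + η)⁻¹ · rot_{π/3} · C(x) = λ(x)·I for a.e. x. (This holds even though neither of the associated skew products R(x,a) = (x+η, a) on 𝕋×ℤ₂ nor S(x,y) = (x+η, y+1/3) on 𝕋² is ergodic, showing that ergodicity of R or S is not necessary for this conclusion.) -/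
/-!
Conjugating by `Q = !![1, -I; 1, I]` diagonalises `rot_θ` as `D = diag(e^{-iθ}, e^{iθ})`. If
`C(x + η)⁻¹ rot_{π/3} C(x) = λ(x) I`, then `B = Q C` satisfies `D B(x) = λ(x) B(x + η)`, so the
first row of `B` is multiplied by `e^{-iπ/3}/λ` and `det B` by `1/λ²`. Hence `B₀ⱼ² / det B` is an
eigenfunction of the rotation whose eigenvalue `e^{-2πi/3}` is a cube root of unity other than
`1`: it is invariant under the rotation by `3η`, which is ergodic, so it is a.e. constant, and the
constant must vanish. But `B₀₀` and `B₀₁` cannot both vanish since `det B ≠ 0`.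
-/

open MeasureTheory Matrix

open Complex
open scoped Real

theorem Matrix.mul_eq_smul_of_inv_mul_mul_eq_smul {n R : Type*} [Fintype n] [DecidableEq n]
    [CommRing R] {A C C' : Matrix n n R} {l : R}
    (hC' : IsUnit C') (h : C'⁻¹ * A * C = l • 1) : A * C = l • C' := by
  have hdet : IsUnit C'.det := (isUnit_iff_isUnit_det C').1 hC'
  rw [← one_mul (A * C), ← mul_nonsing_inv C' hdet, Matrix.mul_assoc, ← Matrix.mul_assoc C'⁻¹, h,
    Matrix.mul_smul, Matrix.mul_one]

theorem Matrix.sq_div_det_eq_of_diagonal_mul_eq_smul {K : Type*} [Field K] {a b l : K}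
    (ha : a ≠ 0) (hb : b ≠ 0) {M N : Matrix (Fin 2) (Fin 2) K} (hM : M.det ≠ 0)
    (h : diagonal ![a, b] * M = l • N) (j : Fin 2) :
    N 0 j ^ 2 / N.det = a / b * (M 0 j ^ 2 / M.det) := by
  have hdet : a * b * M.det = l ^ 2 * N.det := by
    simpa [det_smul, det_diagonal, Fin.prod_univ_two] using congrArg det h
  have hentry : a * M 0 j = l * N 0 j := by
    simpa [diagonal_mul] using congrArg (· 0 j) h
  have hl : l ≠ 0 := by rintro rfl; simp_all
  have hN : N.det ≠ 0 := by rintro h0; simp_all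
  field_simp
  apply mul_left_cancel₀ (pow_ne_zero 2 hl)
  linear_combination (-b * M.det * (a * M 0 j + l * N 0 j)) * hentry + a * M 0 j ^ 2 * hdet

def rotDiagonalizer : Matrix (Fin 2) (Fin 2) ℂ := !![1, -I; 1, I]

theorem det_rotDiagonalizer : rotDiagonalizer.det = 2 * I := by
  simp [rotDiagonalizer, det_fin_two]; ring

theorem rotDiagonalizer_mul_rotM (θ : ℝ) :
    rotDiagonalizer * (rotM θ).map ofReal =
      diagonal ![exp (-θ * I), exp (θ * I)] * rotDiagonalizer := by
  rw [exp_mul_I, exp_mul_I, cos_neg, sin_neg]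
  ext i j
  fin_cases i <;> fin_cases j <;>
    simp [rotDiagonalizer, rotM, mul_apply, Fin.sum_univ_two] <;> ring_nf <;> simp [I_sq]

theorem isPrimitiveRoot_exp_neg_pi_div_three_div_exp :
    IsPrimitiveRoot (exp (-(π / 3 : ℝ) * I) / exp ((π / 3 : ℝ) * I)) 3 := by
  have h : exp (-(π / 3 : ℝ) * I) / exp ((π / 3 : ℝ) * I) = (exp (2 * π * I / (3 : ℕ)))⁻¹ := by
    rw [← exp_sub, ← exp_neg]; push_cast; ring_nf
  rw [h]
  exact (isPrimitiveRoot_exp 3 three_ne_zero).inv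

theorem MeasureTheory.ae_comp_add_nsmul_eq_pow_mul {G M : Type*} [AddMonoid G] [MeasurableSpace G]
    [MeasurableAdd G] {μ : Measure G} [μ.IsAddRightInvariant] [Monoid M] {a : G} {c : M}
    {g : G → M} (h : ∀ᵐ x ∂μ, g (x + a) = c * g x) (n : ℕ) :
    ∀ᵐ x ∂μ, g (x + n • a) = c ^ n * g x := by
  induction n with
  | zero => simp
  | succ n ih =>
    filter_upwards [ih, (measurePreserving_add_right μ (n • a)).quasiMeasurePreserving.ae h]
      with x hn ha
    rw [succ_nsmul, ← add_assoc, ha, hn, pow_succ', mul_assoc]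

namespace AddCircle

variable {p : ℝ} [Fact (0 < p)]

theorem addOrderOf_coe_eq_zero_of_irrational {η : ℝ} (hη : Irrational (η / p)) :
    addOrderOf (η : AddCircle p) = 0 :=
  denseRange_zsmul_iff.1 (denseRange_zsmul_coe_iff.2 hη)

theorem ae_eq_zero_of_comp_add_eq_mul {a : AddCircle p} (ha : addOrderOf a = 0) {c : ℂ} {n : ℕ}
    (hn : n ≠ 0) (hcn : c ^ n = 1) (hc : c ≠ 1) {g : AddCircle p → ℂ}
    (hg : AEStronglyMeasurable g) (h : ∀ᵐ x, g (x + a) = c * g x) : g =ᵐ[volume] 0 := by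
  have hna : addOrderOf (n • a) = 0 := by
    simp only [addOrderOf_eq_zero_iff, isOfFinAddOrder_nsmul] at ha ⊢
    tauto
  obtain ⟨K, hK⟩ := (ergodic_add_right.2 hna).ae_eq_const_of_ae_eq_comp_ae hg <| by
    filter_upwards [ae_comp_add_nsmul_eq_pow_mul h n] with x hx
    simp [hx, hcn]
  have hK0 : K = 0 := by
    obtain ⟨x, hx, hxK, hxaK⟩ := (h.and (hK.and
      ((measurePreserving_add_right volume a).quasiMeasurePreserving.ae hK))).exists
    simp only [Function.const_apply] at hxK hxaK
    rw [hxK, hxaK] at hx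
    exact (mul_eq_zero.1 (by linear_combination hx : (1 - c) * K = 0)).resolve_left
      (sub_ne_zero.2 hc.symm)
  simpa [hK0] using hK

end AddCircle

/-- For the constant cocycle `A(x) = rot_{π/3}` over the irrational rotation `T(x) = x + η`
on `𝕋`, the cocycle is not cohomologous to a scalar multiple of the identity. -/
theorem stmt16 (η : ℝ) (hη : Irrational η)
    (T : UnitAddCircle → UnitAddCircle) (hT : ∀ x, T x = x + ↑η) :
    ¬ ∃ (C : UnitAddCircle → Matrix (Fin 2) (Fin 2) ℂ) (lam : UnitAddCircle → ℂ),
      (∀ i j, Measurable fun x => C x i j) ∧ Measurable lam ∧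
      (∀ x, IsUnit (C x)) ∧
      (∀ᵐ x ∂(volume : Measure UnitAddCircle),
        (C (T x))⁻¹ * ((rotM (Real.pi / 3)).map Complex.ofReal) * C x = lam x • 1) := by
  rintro ⟨C, lam, hCm, -, hCu, hcoh⟩
  set B := fun x => rotDiagonalizer * C x
  have hdet : ∀ x, (B x).det ≠ 0 := fun x => by
    simpa [B, det_mul, det_rotDiagonalizer] using ((isUnit_iff_isUnit_det _).1 (hCu x)).ne_zero
  have hB : ∀ᵐ x, diagonal ![exp (-(π / 3 : ℝ) * I), exp ((π / 3 : ℝ) * I)] * B x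
      = lam x • B (x + η) := by
    filter_upwards [hcoh] with x hx
    rw [← hT x, ← Matrix.mul_assoc, ← rotDiagonalizer_mul_rotM, Matrix.mul_assoc,
      mul_eq_smul_of_inv_mul_mul_eq_smul (hCu _) hx, Matrix.mul_smul]
  have hmeas : ∀ j, AEStronglyMeasurable fun x => B x 0 j ^ 2 / (B x).det := fun j => by
    simp only [B, det_fin_two, mul_apply, Fin.sum_univ_two]
    exact Measurable.aestronglyMeasurable (by fun_prop)
  have hprim := isPrimitiveRoot_exp_neg_pi_div_three_div_exp
  have hzero : ∀ j, (fun x => B x 0 j ^ 2 / (B x).det) =ᵐ[volume] 0 := fun j =>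
    AddCircle.ae_eq_zero_of_comp_add_eq_mul
      (AddCircle.addOrderOf_coe_eq_zero_of_irrational (by rwa [div_one])) three_ne_zero
      hprim.pow_eq_one (hprim.ne_one (by norm_num)) (hmeas j)
      (hB.mono fun x hx => sq_div_det_eq_of_diagonal_mul_eq_smul (exp_ne_zero _)
        (exp_ne_zero _) (hdet x) hx j)
  obtain ⟨x, h0, h1⟩ := ((hzero 0).and (hzero 1)).exists
  simp only [Pi.zero_apply, div_eq_zero_iff, hdet x, or_false, pow_eq_zero_iff two_ne_zero] at h0 h1
  exact hdet x (by rw [det_fin_two, h0, h1]; ring)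
end
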